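/- arXiv:1912.02342 — 5 statements merged into one kernel-verified Lean document; each statement's English description precedes it below -/
import Mathlib

section
/- The multicolor triangle Ramsey numbers are supermultiplicative: for all m1, m2 ≥ 1, r(3; m1 + m2) ≥ (r(3;m1) − 1)·(r(3;m2) − 1) + 1. -/
/-- The coloring `χ` of the edges of `K_n` contains a monochromatic triangle. -/
def HasMonoTriangle {n m : ℕ} (χ : Fin n → Fin n → Fin m) : Prop :=
  ∃ u v w : Fin n, u ≠ v ∧ u ≠ w ∧ v ≠ w ∧ χ u v = χ u w ∧ χ u v = χ v w

/-- The multicolor triangle Ramsey number `r(3;m)`: the smallest `n` such that every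
symmetric `m`-coloring of the edges of `K_n` contains a monochromatic triangle. -/
noncomputable def ramseyThree (m : ℕ) : ℕ :=
  sInf {n : ℕ | ∀ χ : Fin n → Fin n → Fin m, (∀ u v, χ u v = χ v u) → HasMonoTriangle χ}

/-! Chung's construction. Given symmetric colorings `χ₁` of `K_a` with `m₁` colors and `χ₂` of
`K_b` with `m₂` colors, both without monochromatic triangles, color `K_a × K_b` by `χ₁` on edges inside
a block `K_a × {y}` and by `χ₂` on edges between blocks, with disjoint palettes. The edges of a
monochromatic triangle are then either all inside one block, giving a `χ₁`-triangle, or all between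
three distinct blocks, giving a `χ₂`-triangle. With `a = r(3;m₁) - 1` and `b = r(3;m₂) - 1` this
shows `ab < r(3;m₁+m₂)`, provided `r(3;m₁+m₂)` is not the junk value `sInf ∅ = 0`; finiteness comes
from the pigeonhole bound `r(3;m+1) ≤ (m+1)(r(3;m) - 1) + 2`. -/

open Function Finset

def MonoTriangleFree {V C : Type*} (χ : V → V → C) : Prop :=
  ∀ ⦃u v w⦄, u ≠ v → u ≠ w → v ≠ w → χ u v = χ u w → χ u v ≠ χ v w

namespace MonoTriangleFree

variable {V W C D : Type*} {χ : V → V → C}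

theorem comp_left (hχ : MonoTriangleFree χ) {f : W → V} (hf : Injective f) :
    MonoTriangleFree fun u v => χ (f u) (f v) :=
  fun _ _ _ huv huw hvw => hχ (hf.ne huv) (hf.ne huw) (hf.ne hvw)

theorem comp_right_of_injOn (hχ : MonoTriangleFree χ) {s : Set C}
    (hs : ∀ u v, u ≠ v → χ u v ∈ s) {g : C → D} (hg : Set.InjOn g s) :
    MonoTriangleFree fun u v => g (χ u v) := fun _ _ _ huv huw hvw h₁ h₂ =>
  hχ huv huw hvw (hg (hs _ _ huv) (hs _ _ huw) h₁) (hg (hs _ _ huv) (hs _ _ hvw) h₂)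

end MonoTriangleFree

theorem monoTriangleFree_iff_not_hasMonoTriangle {n m : ℕ} {χ : Fin n → Fin n → Fin m} :
    MonoTriangleFree χ ↔ ¬HasMonoTriangle χ := by
  simp only [MonoTriangleFree, HasMonoTriangle, not_exists, not_and]

def lexProdColoring {A B C₁ C₂ : Type*} [DecidableEq B] (χ₁ : A → A → C₁) (χ₂ : B → B → C₂) :
    A × B → A × B → C₁ ⊕ C₂ := fun p q =>
  if p.2 = q.2 then .inl (χ₁ p.1 q.1) else .inr (χ₂ p.2 q.2)

section lexProdColoring

variable {A B C₁ C₂ : Type*} [DecidableEq B] {χ₁ : A → A → C₁} {χ₂ : B → B → C₂}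

theorem lexProdColoring_of_eq {p q : A × B} (h : p.2 = q.2) :
    lexProdColoring χ₁ χ₂ p q = .inl (χ₁ p.1 q.1) := if_pos h

theorem lexProdColoring_of_ne {p q : A × B} (h : p.2 ≠ q.2) :
    lexProdColoring χ₁ χ₂ p q = .inr (χ₂ p.2 q.2) := if_neg h

theorem lexProdColoring_symm (h₁ : ∀ x y, χ₁ x y = χ₁ y x) (h₂ : ∀ x y, χ₂ x y = χ₂ y x)
    (p q : A × B) : lexProdColoring χ₁ χ₂ p q = lexProdColoring χ₁ χ₂ q p := by
  by_cases h : p.2 = q.2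
  · rw [lexProdColoring_of_eq h, lexProdColoring_of_eq h.symm, h₁]
  · rw [lexProdColoring_of_ne h, lexProdColoring_of_ne (Ne.symm h), h₂]

theorem MonoTriangleFree.lexProdColoring (h₁ : MonoTriangleFree χ₁) (h₂ : MonoTriangleFree χ₂) :
    MonoTriangleFree (lexProdColoring χ₁ χ₂) := by
  intro p q r hpq hpr hqr hpqr
  by_cases hpq₂ : p.2 = q.2
  · have hpr₂ : p.2 = r.2 := by
      by_contra h
      rw [lexProdColoring_of_eq hpq₂, lexProdColoring_of_ne h] at hpqr
      exact Sum.inl_ne_inr hpqr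
    have hqr₂ : q.2 = r.2 := hpq₂.symm.trans hpr₂
    rw [lexProdColoring_of_eq hpq₂, lexProdColoring_of_eq hpr₂] at hpqr
    rw [lexProdColoring_of_eq hpq₂, lexProdColoring_of_eq hqr₂, ne_eq, Sum.inl.injEq]
    exact h₁ (fun h => hpq (Prod.ext h hpq₂)) (fun h => hpr (Prod.ext h hpr₂))
      (fun h => hqr (Prod.ext h hqr₂)) (Sum.inl_injective hpqr)
  · rw [lexProdColoring_of_ne hpq₂]
    have hpr₂ : p.2 ≠ r.2 := fun h => by
      rw [lexProdColoring_of_ne hpq₂, lexProdColoring_of_eq h] at hpqr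
      exact Sum.inr_ne_inl hpqr
    rw [lexProdColoring_of_ne hpq₂, lexProdColoring_of_ne hpr₂] at hpqr
    by_cases hqr₂ : q.2 = r.2
    · rw [lexProdColoring_of_eq hqr₂]
      exact Sum.inr_ne_inl
    · rw [lexProdColoring_of_ne hqr₂, ne_eq, Sum.inr.injEq]
      exact h₂ hpq₂ hpr₂ hqr₂ (Sum.inr_injective hpqr)

end lexProdColoring

-- The arrow relation `n → (3)ₘ`; `ramseyThree m` unfolds to `sInf {n | ForcesMonoTriangle m n}`.
def ForcesMonoTriangle (m n : ℕ) : Prop :=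
  ∀ χ : Fin n → Fin n → Fin m, (∀ u v, χ u v = χ v u) → HasMonoTriangle χ

theorem not_forcesMonoTriangle_iff {m n : ℕ} : ¬ForcesMonoTriangle m n ↔
    ∃ χ : Fin n → Fin n → Fin m, (∀ u v, χ u v = χ v u) ∧ MonoTriangleFree χ := by
  simp only [ForcesMonoTriangle, monoTriangleFree_iff_not_hasMonoTriangle, not_forall, exists_prop]

theorem not_forcesMonoTriangle_zero (m : ℕ) : ¬ForcesMonoTriangle m 0 := fun h => by
  obtain ⟨u, -⟩ := h (fun u => u.elim0) (fun u => u.elim0)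
  exact u.elim0

theorem ForcesMonoTriangle.mono {m n n' : ℕ} (h : ForcesMonoTriangle m n) (hle : n ≤ n') :
    ForcesMonoTriangle m n' := by
  intro χ hχ
  by_contra hfree
  rw [← monoTriangleFree_iff_not_hasMonoTriangle] at hfree
  exact monoTriangleFree_iff_not_hasMonoTriangle.1 (hfree.comp_left (Fin.castLE_injective hle))
    (h _ fun u v => hχ _ _)

theorem forcesMonoTriangle_one_three : ForcesMonoTriangle 1 3 := fun _ _ =>
  ⟨0, 1, 2, by decide, by decide, by decide, Subsingleton.elim _ _, Subsingleton.elim _ _⟩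

theorem exists_embedding_monochromatic_star {n k N : ℕ} (χ : Fin n → Fin n → Fin k) (v : Fin n)
    (hn : k * N + 1 < n) : ∃ (c : Fin k) (e : Fin N ↪ Fin n), ∀ i, e i ≠ v ∧ χ v (e i) = c := by
  obtain ⟨c, -, hc⟩ := exists_lt_card_fiber_of_mul_lt_card_of_maps_to
    (s := univ.erase v) (t := univ) (n := N) (f := χ v) (fun _ _ => mem_univ _)
    (by rw [card_erase_of_mem (mem_univ v), card_univ, card_univ, Fintype.card_fin,
      Fintype.card_fin]; omega)
  obtain ⟨T, hT, hcard⟩ := exists_subset_card_eq hc.le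
  refine ⟨c, (T.orderEmbOfFin hcard).toEmbedding, fun i => ?_⟩
  simpa using hT (T.orderEmbOfFin_mem hcard i)

theorem ForcesMonoTriangle.succ {m N : ℕ} [NeZero m] (hN : ForcesMonoTriangle m N) :
    ForcesMonoTriangle (m + 1) ((m + 1) * N + 2) := by
  by_contra h
  obtain ⟨χ, hχ, hfree⟩ := not_forcesMonoTriangle_iff.1 h
  obtain ⟨c, e, he⟩ := exists_embedding_monochromatic_star (N := N) χ 0 (by omega)
  -- `0, e i, e j` would form a triangle of color `c`
  have hne : ∀ i j, i ≠ j → χ (e i) (e j) ∈ ({c}ᶜ : Set (Fin (m + 1))) := fun i j hij =>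
    (he i).2 ▸ (hfree (he i).1.symm (he j).1.symm (e.injective.ne hij)
      ((he i).2.trans (he j).2.symm)).symm
  have hinj : Set.InjOn (invFun c.succAbove) ({c}ᶜ : Set (Fin (m + 1))) := fun x hx y hy hxy => by
    rw [← invFun_eq (Fin.exists_succAbove_eq hx), ← invFun_eq (Fin.exists_succAbove_eq hy), hxy]
  exact not_forcesMonoTriangle_iff.2
    ⟨_, fun i j => by rw [hχ], (hfree.comp_left e.injective).comp_right_of_injOn hne hinj⟩ hN

theorem exists_forcesMonoTriangle : ∀ m, ∃ n, ForcesMonoTriangle m n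
  | 0 => ⟨1, fun χ _ => (χ 0 0).elim0⟩
  | 1 => ⟨3, forcesMonoTriangle_one_three⟩
  | m + 2 =>
    have ⟨_, hN⟩ := exists_forcesMonoTriangle (m + 1)
    ⟨_, hN.succ⟩

theorem not_forcesMonoTriangle_mul {m₁ m₂ a b : ℕ} (ha : ¬ForcesMonoTriangle m₁ a)
    (hb : ¬ForcesMonoTriangle m₂ b) : ¬ForcesMonoTriangle (m₁ + m₂) (a * b) := by
  obtain ⟨χ₁, hχ₁, hfree₁⟩ := not_forcesMonoTriangle_iff.1 ha
  obtain ⟨χ₂, hχ₂, hfree₂⟩ := not_forcesMonoTriangle_iff.1 hb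
  let E : Fin (a * b) ≃ Fin a × Fin b := finProdFinEquiv.symm
  refine not_forcesMonoTriangle_iff.2 ⟨fun u v => finSumFinEquiv (lexProdColoring χ₁ χ₂ (E u) (E v)),
    fun u v => congrArg _ (lexProdColoring_symm hχ₁ hχ₂ _ _), ?_⟩
  exact ((hfree₁.lexProdColoring hfree₂).comp_left E.injective).comp_right_of_injOn
    (fun _ _ _ => Set.mem_univ _) finSumFinEquiv.injective.injOn

theorem forcesMonoTriangle_ramseyThree (m : ℕ) : ForcesMonoTriangle m (ramseyThree m) :=
  Nat.sInf_mem (exists_forcesMonoTriangle m)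

theorem lt_ramseyThree_of_not_forcesMonoTriangle {m n : ℕ} (h : ¬ForcesMonoTriangle m n) :
    n < ramseyThree m :=
  lt_of_not_ge fun hle => h ((forcesMonoTriangle_ramseyThree m).mono hle)

theorem not_forcesMonoTriangle_ramseyThree_sub_one (m : ℕ) :
    ¬ForcesMonoTriangle m (ramseyThree m - 1) := by
  have hpos : 0 < ramseyThree m := Nat.pos_of_ne_zero fun h =>
    not_forcesMonoTriangle_zero m (h ▸ forcesMonoTriangle_ramseyThree m)
  exact Nat.notMem_of_lt_sInf (Nat.sub_one_lt hpos.ne')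

theorem ramseyThree_supermultiplicative_general (m₁ m₂ : ℕ) :
    (ramseyThree m₁ - 1) * (ramseyThree m₂ - 1) + 1 ≤ ramseyThree (m₁ + m₂) :=
  lt_ramseyThree_of_not_forcesMonoTriangle <| not_forcesMonoTriangle_mul
    (not_forcesMonoTriangle_ramseyThree_sub_one m₁) (not_forcesMonoTriangle_ramseyThree_sub_one m₂)

/-- Supermultiplicativity (Chung): `r(3; m₁+m₂) ≥ (r(3;m₁) − 1)(r(3;m₂) − 1) + 1`. -/
theorem ramseyThree_supermultiplicative (m₁ m₂ : ℕ) (h₁ : 1 ≤ m₁) (h₂ : 1 ≤ m₂) :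
    (ramseyThree m₁ - 1) * (ramseyThree m₂ - 1) + 1 ≤ ramseyThree (m₁ + m₂) :=
  ramseyThree_supermultiplicative_general m₁ m₂
end

section
/- If a finite set system F shatters a set S of size 2^{d+1}, then the dual set system F* shatters a set of size d+1. (Contrapositive form of the dual VC-dimension bound.) -/
open Finset

variable {α : Type*}

/-- `S` is shattered by the finite set system `F`. -/
def SysShatters [DecidableEq α] (F : Finset (Finset α)) (S : Finset α) : Prop :=
  ∀ B ⊆ S, ∃ A ∈ F, A ∩ S = B

/-- The set system `F` has VC-dimension at most `d`. -/
def VCDimLE [DecidableEq α] (F : Finset (Finset α)) (d : ℕ) : Prop :=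
  ∀ S : Finset α, SysShatters F S → S.card ≤ d

/-- The dual set system `F* = { {A ∈ F : v ∈ A} : v ∈ V }` of `F`. -/
def dualSystem {V : Type*} [Fintype V] [DecidableEq V] (F : Finset (Finset V)) :
    Finset (Finset (Finset V)) :=
  Finset.univ.image (fun v : V => F.filter (fun A => v ∈ A))

/-- `F` has dual VC-dimension at most `d`. -/
def DualVCDimLE {V : Type*} [Fintype V] [DecidableEq V] (F : Finset (Finset V)) (d : ℕ) : Prop :=
  VCDimLE (dualSystem F) d

/-- The number of members of `F` crossing the pair `{u,v}`, i.e. containing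
exactly one of `u` and `v`. -/
def crossCount [DecidableEq α] (F : Finset (Finset α)) (u v : α) : ℕ :=
  (F.filter (fun A => (u ∈ A ∧ v ∉ A) ∨ (v ∈ A ∧ u ∉ A))).card

/-!
Label the `2^(d+1)` points of `S` by the subsets `J` of `{0, …, d}`, say `S = {s J}`.
Shattering gives, for each coordinate `i`, a member `A i ∈ F` cutting out of `S` exactly the
points whose label contains `i`, so that `s J ∈ A i ↔ i ∈ J`. These `d + 1` sets are shattered
by the dual system: the subfamily `{A i : i ∈ J}` is cut out by the dual set of the point `s J`.
-/

section Dual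

variable {V ι : Type*}

theorem SysShatters.exists_mem_iff_mem [DecidableEq V] [Fintype ι] [DecidableEq ι]
    {F : Finset (Finset V)} {S : Finset V} (hF : SysShatters F S)
    {s : Finset ι → V} (hs : Function.Injective s) (hsS : ∀ J, s J ∈ S) :
    ∃ A : ι → Finset V, (∀ i, A i ∈ F) ∧ ∀ i J, s J ∈ A i ↔ i ∈ J := by
  have hB : ∀ i, ({J | i ∈ J} : Finset (Finset ι)).image s ⊆ S := fun i =>
    image_subset_iff.2 fun J _ => hsS J
  choose A hAF hAS using fun i => hF _ (hB i)
  refine ⟨A, hAF, fun i J => ?_⟩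
  calc s J ∈ A i ↔ s J ∈ A i ∩ S := by simp [hsS J]
    _ ↔ i ∈ J := by rw [hAS i, hs.mem_finset_image]; simp

theorem injective_of_mem_iff_mem [DecidableEq ι] {A : ι → Finset V} {s : Finset ι → V}
    (hA : ∀ i J, s J ∈ A i ↔ i ∈ J) : Function.Injective A := fun i j hij =>
  (mem_singleton.1 ((hA j {i}).1 (hij ▸ (hA i {i}).2 (mem_singleton_self i)))).symm

theorem filter_mem_mem_dualSystem [Fintype V] [DecidableEq V] (F : Finset (Finset V)) (v : V) :
    F.filter (fun A => v ∈ A) ∈ dualSystem F :=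
  mem_image_of_mem _ (mem_univ v)

theorem sysShatters_dualSystem_image [Fintype V] [DecidableEq V] [Fintype ι]
    {F : Finset (Finset V)} {A : ι → Finset V} (hAF : ∀ i, A i ∈ F)
    {s : Finset ι → V} (hA : ∀ i J, s J ∈ A i ↔ i ∈ J) :
    SysShatters (dualSystem F) (univ.image A) := by
  intro C hC
  refine ⟨_, filter_mem_mem_dualSystem F (s {i | A i ∈ C}), ?_⟩
  ext X
  simp only [mem_inter, mem_filter, mem_image, mem_univ, true_and]
  constructor
  · rintro ⟨⟨-, hX⟩, i, rfl⟩
    simpa using (hA i _).1 hX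
  · intro hXC
    obtain ⟨i, -, rfl⟩ := mem_image.1 (hC hXC)
    exact ⟨⟨hAF i, (hA i _).2 (by simpa using hXC)⟩, i, rfl⟩

end Dual

/-- If a finite set system `F` shatters a set `S` of size `2^{d+1}`, then the dual
set system `F*` shatters a subset of its ground set `F` of size `d+1`. -/
theorem dual_shatters_of_shatters {V : Type*} [Fintype V] [DecidableEq V]
    (F : Finset (Finset V)) (d : ℕ) (S : Finset V)
    (hcard : S.card = 2 ^ (d + 1)) (hshat : SysShatters F S) :
    ∃ T : Finset (Finset V), T ⊆ F ∧ T.card = d + 1 ∧ SysShatters (dualSystem F) T := by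
  obtain ⟨e⟩ : Nonempty (Finset (Fin (d + 1)) ≃ S) :=
    Fintype.card_eq.1 (by simp [Fintype.card_finset, hcard])
  obtain ⟨A, hAF, hA⟩ := hshat.exists_mem_iff_mem (s := fun J => e J)
    (Subtype.val_injective.comp e.injective) fun J => (e J).2
  refine ⟨univ.image A, image_subset_iff.2 fun i _ => hAF i, ?_,
    sysShatters_dualSystem_image hAF hA⟩
  rw [card_image_of_injective _ (injective_of_mem_iff_mem hA), card_univ, Fintype.card_fin]
end

section
/- (Haussler's packing lemma, dual form) For every d ≥ 1 there is a constant c1 = c1(d) such that the following holds: if F is a finite set system on ground set V whose dual VC-dimension is at most d, and X ⊆ V is δ-separated (every pair of distinct points of X is crossed by at least δ members of F), then |X| ≤ c1·(|F|/δ)^d. -/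
/-!
Replacing each point `v` by the set of members of `F` containing it turns `X` into a family `P` of
subsets of `Ω = F` of VC-dimension at most `d` whose members pairwise have symmetric difference of
size at least `δ`, so Haussler's packing lemma for such families applies.

Its proof: the one-inclusion graph of a family of VC-dimension at most `d` has at most `d` times as
many edges as vertices (split off one point and induct), also when the vertices carry weights `w`
and an edge `{C, C'}` weighs `min (w C) (w C')`. Weight the traces of `P` on a set `A` by their
multiplicities. Summed over all `s`-subsets `A ⊆ Ω` and the directions `b ∈ A`, the edge weights
total at most `choose |Ω| s * d * |P|`. Summed instead over the `(s - 1)`-subsets `A'` and the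
points `b ∉ A'`, they are large: the members of `P` with a given trace on `A'` are `δ`-separated
outside `A'`, so the points `b` split them often, and by Sauer–Shelah there are at most `s ^ d`
such classes. This gives `choose |Ω| (s - 1) * δ * (|P| - s ^ d) / 2` from below, and
`s ≈ 4 d |Ω| / δ` yields `|P| ≤ 2 s ^ d`.
-/

open Finset

variable {α : Type*}

/-- `X` is `δ`-separated with respect to `F`: every pair of distinct points of `X`
is crossed by at least `δ` members of `F`. -/
def Separated [DecidableEq α] (F : Finset (Finset α)) (δ : ℝ) (X : Finset α) : Prop :=
  ∀ u ∈ X, ∀ v ∈ X, u ≠ v → δ ≤ (crossCount F u v : ℝ)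


open scoped symmDiff

section SetFamily

variable [DecidableEq α] {P : Finset (Finset α)} {d : ℕ}

lemma sysShatters_iff_shatters {S : Finset α} : SysShatters P S ↔ P.Shatters S := by
  simp only [SysShatters, Finset.Shatters, inter_comm S]

lemma vcDimLE_iff : VCDimLE P d ↔ ∀ S, P.Shatters S → #S ≤ d := by
  simp only [VCDimLE, sysShatters_iff_shatters]

lemma VCDimLE.mono {Q : Finset (Finset α)} (h : VCDimLE Q d) (hPQ : P ⊆ Q) : VCDimLE P d := by
  rw [vcDimLE_iff] at h ⊢
  exact fun S hS => h S (hS.mono_left hPQ)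

lemma Finset.Shatters.of_image_inter {A S : Finset α} (h : (P.image (· ∩ A)).Shatters S) :
    P.Shatters S := by
  obtain ⟨_, hT, hST⟩ := h.exists_superset
  obtain ⟨T, -, rfl⟩ := mem_image.1 hT
  have hSA : S ⊆ A := hST.trans inter_subset_right
  intro t ht
  obtain ⟨_, hU', rfl⟩ := h ht
  obtain ⟨U, hU, rfl⟩ := mem_image.1 hU'
  exact ⟨U, hU, by rw [inter_comm U A, ← inter_assoc, inter_eq_left.2 hSA]⟩

lemma VCDimLE.image_inter (h : VCDimLE P d) (A : Finset α) : VCDimLE (P.image (· ∩ A)) d := by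
  rw [vcDimLE_iff] at h ⊢
  exact fun S hS => h S hS.of_image_inter

lemma Finset.Shatters.of_image_erase {x : α} {S : Finset α}
    (h : (P.image (·.erase x)).Shatters S) : P.Shatters S := by
  obtain ⟨_, hT, hST⟩ := h.exists_superset
  obtain ⟨T, -, rfl⟩ := mem_image.1 hT
  have hxS : x ∉ S := fun hx => notMem_erase x T (hST hx)
  intro t ht
  obtain ⟨_, hU', rfl⟩ := h ht
  obtain ⟨U, hU, rfl⟩ := mem_image.1 hU'
  exact ⟨U, hU, by rw [inter_erase, erase_eq_of_notMem fun hx => hxS (mem_inter.1 hx).1]⟩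

lemma VCDimLE.image_erase (h : VCDimLE P d) (x : α) : VCDimLE (P.image (·.erase x)) d := by
  rw [vcDimLE_iff] at h ⊢
  exact fun S hS => h S hS.of_image_erase

lemma card_powerset_filter_card_le (Ω : Finset α) (d : ℕ) :
    #{S ∈ Ω.powerset | #S ≤ d} ≤ (#Ω + 1) ^ d := by
  calc #{S ∈ Ω.powerset | #S ≤ d}
      ≤ #((range (d + 1)).biUnion (Ω.powersetCard ·)) := by
        refine card_le_card fun S hS => ?_
        rw [mem_filter, mem_powerset] at hS
        simp only [mem_biUnion, mem_range, mem_powersetCard]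
        exact ⟨#S, by omega, hS.1, rfl⟩
    _ ≤ ∑ k ∈ range (d + 1), #(Ω.powersetCard k) := card_biUnion_le
    _ ≤ ∑ k ∈ range (d + 1), #Ω ^ k * 1 ^ (d - k) * d.choose k := by
        gcongr with k hk
        rw [card_powersetCard, one_pow, mul_one]
        exact (Nat.choose_le_pow _ _).trans
          (Nat.le_mul_of_pos_right _ (Nat.choose_pos (by simpa [Nat.lt_succ_iff] using hk)))
    _ = (#Ω + 1) ^ d := (add_pow _ _ _).symm

/-- The **Sauer–Shelah lemma**, relative to a ground set. -/
theorem card_le_succ_pow_of_vcDimLE {Ω : Finset α} (hsub : ∀ S ∈ P, S ⊆ Ω) (h : VCDimLE P d) :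
    #P ≤ (#Ω + 1) ^ d := by
  rw [vcDimLE_iff] at h
  refine (card_le_card_shatterer P).trans
    ((card_le_card fun S hS => ?_).trans (card_powerset_filter_card_le Ω d))
  rw [mem_shatterer] at hS
  obtain ⟨T, hT, hST⟩ := hS.exists_superset
  exact mem_filter.2 ⟨mem_powerset.2 (hST.trans (hsub T hT)), h S hS⟩

end SetFamily

section OneInclusionGraph

variable [DecidableEq α] {P : Finset (Finset α)} {d : ℕ}

/-- The edges of the one-inclusion graph of `P` in direction `b`, each represented by its lower
endpoint `C` (the upper one being `insert b C`). -/
def edgesAlong (P : Finset (Finset α)) (b : α) : Finset (Finset α) :=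
  {C ∈ P | b ∉ C ∧ insert b C ∈ P}

@[simp]
lemma mem_edgesAlong {C : Finset α} {b : α} :
    C ∈ edgesAlong P b ↔ C ∈ P ∧ b ∉ C ∧ insert b C ∈ P :=
  mem_filter

lemma card_edgesAlong_add_le (P Q : Finset (Finset α)) (b : α) :
    #(edgesAlong P b) + #(edgesAlong Q b) ≤ #(edgesAlong (P ∪ Q) b) + #(edgesAlong (P ∩ Q) b) := by
  rw [← card_union_add_card_inter]
  gcongr
  · intro C
    simp only [mem_edgesAlong, mem_union]
    tauto
  · intro C
    simp only [mem_edgesAlong, mem_inter]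
    tauto

lemma edgesAlong_eq_inter (P : Finset (Finset α)) (x : α) :
    edgesAlong P x = P.memberSubfamily x ∩ P.nonMemberSubfamily x := by
  ext C
  simp only [mem_edgesAlong, mem_inter, mem_memberSubfamily, mem_nonMemberSubfamily]
  tauto

lemma card_edgesAlong_eq_add {x b : α} (hxb : x ≠ b) :
    #(edgesAlong P b) =
      #(edgesAlong (P.memberSubfamily x) b) + #(edgesAlong (P.nonMemberSubfamily x) b) := by
  rw [← card_filter_add_card_filter_not (p := fun C => x ∈ C)]
  congr 1
  · refine card_nbij' (·.erase x) (insert x) (fun C hC => ?_) (fun C hC => ?_)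
      (fun C hC => insert_erase (mem_filter.1 hC).2) (fun C hC => ?_)
    · obtain ⟨⟨hC, hbC, hbC'⟩, hxC⟩ := mem_filter.1 hC |>.imp_left mem_edgesAlong.1
      have hxb' : x ∉ insert b (C.erase x) := by simp [hxb]
      refine mem_edgesAlong.2 ⟨mem_memberSubfamily.2 ⟨by rwa [insert_erase hxC], notMem_erase x C⟩,
        fun h => hbC (mem_of_mem_erase h), mem_memberSubfamily.2 ⟨?_, hxb'⟩⟩
      rwa [insert_comm, insert_erase hxC]
    · obtain ⟨hC, hbC, hbC'⟩ := mem_edgesAlong.1 hC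
      refine mem_filter.2
        ⟨mem_edgesAlong.2 ⟨(mem_memberSubfamily.1 hC).1, ?_, ?_⟩, mem_insert_self x C⟩
      · simpa [hxb.symm] using hbC
      · simpa [insert_comm] using (mem_memberSubfamily.1 hbC').1
    · exact erase_insert (mem_memberSubfamily.1 (mem_edgesAlong.1 hC).1).2
  · congr 1
    ext C
    simp only [mem_edgesAlong, mem_filter, mem_nonMemberSubfamily, mem_insert]
    constructor
    · rintro ⟨⟨hC, hbC, hbC'⟩, hxC⟩
      exact ⟨⟨hC, hxC⟩, hbC, hbC', fun h => h.elim hxb hxC⟩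
    · rintro ⟨⟨hC, hxC⟩, hbC, hbC', -⟩
      exact ⟨⟨hC, hbC, hbC'⟩, hxC⟩

lemma Finset.Shatters.insert_of_edgesAlong {x : α} {S : Finset α}
    (h : (edgesAlong P x).Shatters S) : P.Shatters (insert x S) := by
  obtain ⟨T, hT, hST⟩ := h.exists_superset
  have hxS : x ∉ S := fun hx => (mem_edgesAlong.1 hT).2.1 (hST hx)
  intro t ht
  by_cases hxt : x ∈ t
  · obtain ⟨U, hU, hSU⟩ := h (t := t.erase x) fun y hy => by
      simpa [(mem_erase.1 hy).1] using ht (mem_of_mem_erase hy)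
    refine ⟨insert x U, (mem_edgesAlong.1 hU).2.2, ?_⟩
    rw [← insert_inter_distrib, hSU, insert_erase hxt]
  · obtain ⟨U, hU, hSU⟩ := h (t := t) fun y hy => by
      simpa [show y ≠ x by rintro rfl; exact hxt hy] using ht hy
    refine ⟨U, (mem_edgesAlong.1 hU).1, ?_⟩
    rw [insert_inter_of_notMem (mem_edgesAlong.1 hU).2.1, hSU]

lemma VCDimLE.edgesAlong_of_succ (h : VCDimLE P (d + 1)) (x : α) :
    VCDimLE (_root_.edgesAlong P x) d := by
  rw [vcDimLE_iff] at h ⊢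
  intro S hS
  have hxS : x ∉ S := by
    obtain ⟨T, hT, hST⟩ := hS.exists_superset
    exact fun hx => (mem_edgesAlong.1 hT).2.1 (hST hx)
  simpa [card_insert_of_notMem hxS] using h _ hS.insert_of_edgesAlong

lemma VCDimLE.edgesAlong_eq_empty (h : VCDimLE P 0) (x : α) : _root_.edgesAlong P x = ∅ := by
  rw [vcDimLE_iff] at h
  by_contra hne
  have := h _ (shatters_empty.2 (nonempty_iff_ne_empty.2 hne)).insert_of_edgesAlong
  simp at this

/-- Haussler's edge density bound for the one-inclusion graph. -/
theorem sum_card_edgesAlong_le (Ω : Finset α) (h : VCDimLE P d) :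
    ∑ b ∈ Ω, #(edgesAlong P b) ≤ d * #P := by
  induction Ω using Finset.cons_induction generalizing P d with
  | empty => simp
  | cons x Ω hx ih =>
    rcases d with _ | e
    · simp [h.edgesAlong_eq_empty]
    -- Erasing `x` maps `P` onto `memberSubfamily ∪ nonMemberSubfamily`; the edges along `x` are
    -- the intersection, whose VC-dimension is one less.
    have hP' : VCDimLE (P.memberSubfamily x ∪ P.nonMemberSubfamily x) (e + 1) := by
      rw [memberSubfamily_union_nonMemberSubfamily]
      exact h.image_erase x
    have hsplit : ∑ b ∈ Ω, #(edgesAlong P b) ≤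
        ∑ b ∈ Ω, #(edgesAlong (P.memberSubfamily x ∪ P.nonMemberSubfamily x) b) +
          ∑ b ∈ Ω, #(edgesAlong (edgesAlong P x) b) := by
      rw [← sum_add_distrib]
      refine sum_le_sum fun b hb => ?_
      rw [card_edgesAlong_eq_add (show x ≠ b by rintro rfl; exact hx hb), edgesAlong_eq_inter P x]
      exact card_edgesAlong_add_le _ _ b
    have hcard : #P = #(P.memberSubfamily x ∪ P.nonMemberSubfamily x) + #(edgesAlong P x) := by
      rw [edgesAlong_eq_inter, card_union_add_card_inter,
        card_memberSubfamily_add_card_nonMemberSubfamily]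
    calc ∑ b ∈ cons x Ω hx, #(edgesAlong P b)
        = #(edgesAlong P x) + ∑ b ∈ Ω, #(edgesAlong P b) := sum_cons hx
      _ ≤ #(edgesAlong P x) + ((e + 1) * #(P.memberSubfamily x ∪ P.nonMemberSubfamily x) +
            e * #(edgesAlong P x)) := by
          gcongr
          exact hsplit.trans (add_le_add (ih hP') (ih (h.edgesAlong_of_succ x)))
      _ = (e + 1) * #P := by rw [hcard]; ring

lemma card_range_filter_lt {N a : ℕ} (h : a ≤ N) : #{t ∈ range N | t < a} = a := by
  rw [show {t ∈ range N | t < a} = range a by ext t; simp only [mem_filter, mem_range]; omega,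
    card_range]

theorem sum_sum_edgesAlong_min_le (Ω : Finset α) (h : VCDimLE P d) (w : Finset α → ℕ) :
    ∑ b ∈ Ω, ∑ C ∈ edgesAlong P b, min (w C) (w (insert b C)) ≤ d * ∑ C ∈ P, w C := by
  set N := ∑ C ∈ P, w C
  have hwN : ∀ C ∈ P, w C ≤ N := fun C hC => single_le_sum (fun _ _ => Nat.zero_le _) hC
  -- layer-cake decomposition: level `t` keeps the vertices of weight `> t`
  have hvertex : N = ∑ t ∈ range N, #{C ∈ P | t < w C} := by
    simp only [card_filter]
    rw [sum_comm]
    exact sum_congr rfl fun C hC => by rw [← card_filter, card_range_filter_lt (hwN C hC)]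
  have hedge : ∀ b, ∑ C ∈ edgesAlong P b, min (w C) (w (insert b C)) =
      ∑ t ∈ range N, #(edgesAlong {C ∈ P | t < w C} b) := by
    intro b
    have hlevel : ∀ t, edgesAlong {C ∈ P | t < w C} b =
        {C ∈ edgesAlong P b | t < min (w C) (w (insert b C))} := by
      intro t
      ext C
      simp only [mem_edgesAlong, mem_filter, lt_min_iff]
      tauto
    simp only [hlevel, card_filter]
    rw [sum_comm]
    refine sum_congr rfl fun C hC => ?_
    rw [← card_filter, card_range_filter_lt]
    exact (min_le_left _ _).trans (hwN C (mem_edgesAlong.1 hC).1)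
  calc ∑ b ∈ Ω, ∑ C ∈ edgesAlong P b, min (w C) (w (insert b C))
      = ∑ t ∈ range N, ∑ b ∈ Ω, #(edgesAlong {C ∈ P | t < w C} b) := by
        simp only [hedge]
        exact sum_comm
    _ ≤ ∑ t ∈ range N, d * #{C ∈ P | t < w C} :=
        sum_le_sum fun t _ => sum_card_edgesAlong_le Ω (h.mono (filter_subset _ _))
    _ = d * N := by rw [← mul_sum, ← hvertex]

end OneInclusionGraph

lemma sum_powersetCard_succ_sum {M : Type*} [DecidableEq α] [AddCommMonoid M] (Ω : Finset α)
    (k : ℕ) (f : Finset α → α → M) :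
    ∑ A ∈ Ω.powersetCard (k + 1), ∑ b ∈ A, f A b =
      ∑ A ∈ Ω.powersetCard k, ∑ b ∈ Ω \ A, f (insert b A) b := by
  rw [sum_sigma', sum_sigma']
  refine sum_bij' (fun p _ => ⟨p.1.erase p.2, p.2⟩) (fun p _ => ⟨insert p.2 p.1, p.2⟩)
    (fun p hp => ?_) (fun p hp => ?_) (fun p hp => ?_) (fun p hp => ?_) (fun p hp => ?_)
  all_goals simp only [mem_sigma, mem_powersetCard, mem_sdiff] at hp
  · simp only [mem_sigma, mem_powersetCard, mem_sdiff, notMem_erase, not_false_eq_true, and_true]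
    exact ⟨⟨(erase_subset _ _).trans hp.1.1, by rw [card_erase_of_mem hp.2, hp.1.2]; rfl⟩,
      hp.1.1 hp.2⟩
  · simp only [mem_sigma, mem_powersetCard, mem_insert_self, and_true]
    exact ⟨insert_subset hp.2.1 hp.1.1, by rw [card_insert_of_notMem hp.2.2, hp.1.2]⟩
  · simp [insert_erase hp.2]
  · simp [erase_insert hp.2.2]
  · simp [insert_erase hp.2]

section Separation

variable [DecidableEq α]

lemma sum_sum_card_symmDiff (Φ : Finset (Finset α)) (U : Finset α)
    (hU : ∀ S ∈ Φ, ∀ T ∈ Φ, S ∆ T ⊆ U) :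
    ∑ S ∈ Φ, ∑ T ∈ Φ, #(S ∆ T) = ∑ b ∈ U, 2 * (#{S ∈ Φ | b ∉ S} * #{S ∈ Φ | b ∈ S}) := by
  have hcount : ∀ S ∈ Φ, ∀ T ∈ Φ, #(S ∆ T) = ∑ b ∈ U, if b ∈ S ∆ T then (1 : ℕ) else 0 := by
    intro S hS T hT
    rw [sum_boole, Nat.cast_id, filter_mem_eq_inter, inter_eq_right.2 (hU S hS T hT)]
  have hpoint : ∀ b, ∑ S ∈ Φ, ∑ T ∈ Φ, (if b ∈ S ∆ T then (1 : ℕ) else 0) =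
      2 * (#{S ∈ Φ | b ∉ S} * #{S ∈ Φ | b ∈ S}) := by
    intro b
    have hrow : ∀ S, ∑ T ∈ Φ, (if b ∈ S ∆ T then (1 : ℕ) else 0) =
        if b ∈ S then #{T ∈ Φ | b ∉ T} else #{T ∈ Φ | b ∈ T} := by
      intro S
      rw [sum_boole, Nat.cast_id]
      split_ifs with hbS <;> simp [mem_symmDiff, hbS]
    simp only [hrow, sum_ite, sum_const, smul_eq_mul]
    ring
  rw [sum_congr rfl fun S hS => sum_congr rfl fun T hT => hcount S hS T hT]
  simp only [← hpoint]
  exact (sum_congr rfl fun S _ => sum_comm).trans sum_comm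

lemma mul_card_mul_card_sub_one_le {δ : ℝ} {Φ : Finset (Finset α)}
    (hsep : ∀ S ∈ Φ, ∀ T ∈ Φ, S ≠ T → δ ≤ #(S ∆ T)) :
    δ * (#Φ * (#Φ - 1)) ≤ ∑ S ∈ Φ, ∑ T ∈ Φ, (#(S ∆ T) : ℝ) := by
  rw [mul_comm, mul_assoc, ← nsmul_eq_mul, ← sum_const]
  refine sum_le_sum fun S hS => ?_
  calc ((#Φ : ℝ) - 1) * δ = #(Φ.erase S) • δ := by
        rw [card_erase_of_mem hS, nsmul_eq_mul, Nat.cast_pred (card_pos.2 ⟨S, hS⟩)]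
    _ ≤ ∑ T ∈ Φ.erase S, (#(S ∆ T) : ℝ) :=
        card_nsmul_le_sum _ _ _ fun T hT =>
          hsep S hS T (mem_of_mem_erase hT) (ne_of_mem_erase hT).symm
    _ ≤ ∑ T ∈ Φ, (#(S ∆ T) : ℝ) :=
        sum_le_sum_of_subset_of_nonneg (erase_subset _ _) fun _ _ _ => Nat.cast_nonneg _

theorem half_mul_card_sub_one_le_sum_min {δ : ℝ} (hδ : 0 ≤ δ) {Φ : Finset (Finset α)}
    (U : Finset α) (hU : ∀ S ∈ Φ, ∀ T ∈ Φ, S ∆ T ⊆ U)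
    (hsep : ∀ S ∈ Φ, ∀ T ∈ Φ, S ≠ T → δ ≤ #(S ∆ T)) :
    δ / 2 * (#Φ - 1) ≤ ∑ b ∈ U, (min #{S ∈ Φ | b ∉ S} #{S ∈ Φ | b ∈ S} : ℝ) := by
  rcases Φ.eq_empty_or_nonempty with rfl | hΦ
  · simp only [card_empty, CharP.cast_eq_zero, zero_sub, mul_neg, mul_one, filter_empty, min_self,
      sum_const_zero, Left.neg_nonpos_iff]
    positivity
  have hmin : ∀ b, #{S ∈ Φ | b ∉ S} * #{S ∈ Φ | b ∈ S} ≤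
      #Φ * min #{S ∈ Φ | b ∉ S} #{S ∈ Φ | b ∈ S} := by
    intro b
    have hsplit : #{S ∈ Φ | b ∉ S} + #{S ∈ Φ | b ∈ S} = #Φ := by
      rw [add_comm]
      exact card_filter_add_card_filter_not _
    rw [← min_mul_max, mul_comm, ← hsplit]
    exact Nat.mul_le_mul_right _ (max_le_add_of_nonneg (Nat.zero_le _) (Nat.zero_le _))
  have hsum : ∑ S ∈ Φ, ∑ T ∈ Φ, #(S ∆ T) ≤
      2 * #Φ * ∑ b ∈ U, min #{S ∈ Φ | b ∉ S} #{S ∈ Φ | b ∈ S} := by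
    rw [sum_sum_card_symmDiff Φ U hU, mul_assoc, mul_sum, mul_sum]
    exact sum_le_sum fun b _ => Nat.mul_le_mul_left 2 (hmin b)
  have key : δ * (#Φ * (#Φ - 1)) ≤
      2 * #Φ * ∑ b ∈ U, (min #{S ∈ Φ | b ∉ S} #{S ∈ Φ | b ∈ S} : ℝ) := by
    refine (mul_card_mul_card_sub_one_le hsep).trans ?_
    exact_mod_cast hsum
  have hpos : (0 : ℝ) < #Φ := by exact_mod_cast hΦ.card_pos
  nlinarith

end Separation

section Haussler

variable [DecidableEq α] {P : Finset (Finset α)} {d : ℕ}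

def traceClass (P : Finset (Finset α)) (A C : Finset α) : Finset (Finset α) :=
  {S ∈ P | S ∩ A = C}

lemma traceClass_insert {A C : Finset α} {b : α} (hbC : b ∉ C) :
    traceClass P (insert b A) C = {S ∈ traceClass P A C | b ∉ S} := by
  ext S
  simp only [traceClass, mem_filter, and_assoc]
  by_cases hbS : b ∈ S
  · simp only [inter_insert_of_mem hbS, hbS, not_true_eq_false, and_false, iff_false]
    exact fun h => hbC (h.2 ▸ mem_insert_self b _)
  · simp [inter_insert_of_notMem hbS, hbS]

lemma traceClass_insert_insert {A C : Finset α} {b : α} (hbA : b ∉ A) (hbC : b ∉ C) :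
    traceClass P (insert b A) (insert b C) = {S ∈ traceClass P A C | b ∈ S} := by
  ext S
  simp only [traceClass, mem_filter, and_assoc]
  by_cases hbS : b ∈ S
  · have hbSA : b ∉ S ∩ A := fun h => hbA (mem_of_mem_inter_right h)
    simp only [inter_insert_of_mem hbS, hbS, and_true]
    exact and_congr_right fun _ =>
      ⟨fun h => by rw [← erase_insert hbSA, h, erase_insert hbC], congrArg _⟩
  · simp only [inter_insert_of_notMem hbS, hbS, and_false, iff_false]
    exact fun h => hbS (mem_of_mem_inter_left (h.2 ▸ mem_insert_self b C))

lemma mem_image_inter_of_nonempty {A C : Finset α} (h : (traceClass P A C).Nonempty) :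
    C ∈ P.image (· ∩ A) := by
  obtain ⟨S, hS⟩ := h
  exact mem_image.2 ⟨S, (mem_filter.1 hS).1, (mem_filter.1 hS).2⟩

lemma sum_card_traceClass (P : Finset (Finset α)) (A : Finset α) :
    ∑ C ∈ P.image (· ∩ A), #(traceClass P A C) = #P :=
  (card_eq_sum_card_image _ _).symm

def edgeWeight (P : Finset (Finset α)) (A : Finset α) (b : α) : ℕ :=
  ∑ C ∈ edgesAlong (P.image (· ∩ A)) b, min #(traceClass P A C) #(traceClass P A (insert b C))

lemma sum_edgeWeight_le (h : VCDimLE P d) (A : Finset α) :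
    ∑ b ∈ A, edgeWeight P A b ≤ d * #P := by
  calc ∑ b ∈ A, edgeWeight P A b ≤ d * ∑ C ∈ P.image (· ∩ A), #(traceClass P A C) :=
        sum_sum_edgesAlong_min_le A (h.image_inter A) _
    _ = d * #P := by rw [sum_card_traceClass]

lemma sum_min_card_traceClass_le_edgeWeight {A : Finset α} {b : α} (hbA : b ∉ A) :
    ∑ C ∈ P.image (· ∩ A), min #{S ∈ traceClass P A C | b ∉ S} #{S ∈ traceClass P A C | b ∈ S} ≤
      edgeWeight P (insert b A) b := by
  have hbC : ∀ C ∈ P.image (· ∩ A), b ∉ C := by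
    intro C hC h
    obtain ⟨S, -, rfl⟩ := mem_image.1 hC
    exact hbA (mem_of_mem_inter_right h)
  calc _ = ∑ C ∈ P.image (· ∩ A),
        min #(traceClass P (insert b A) C) #(traceClass P (insert b A) (insert b C)) :=
        sum_congr rfl fun C hC => by
          rw [traceClass_insert (hbC C hC), traceClass_insert_insert hbA (hbC C hC)]
    _ ≤ edgeWeight P (insert b A) b := by
      refine sum_le_sum_of_ne_zero fun C hC hne => ?_
      have h0 : #(traceClass P (insert b A) C) ≠ 0 := fun h => hne (by rw [h, Nat.zero_min])
      have h1 : #(traceClass P (insert b A) (insert b C)) ≠ 0 :=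
        fun h => hne (by rw [h, Nat.min_zero])
      exact mem_edgesAlong.2 ⟨mem_image_inter_of_nonempty (card_ne_zero.1 h0), hbC C hC,
        mem_image_inter_of_nonempty (card_ne_zero.1 h1)⟩

lemma Finset.symmDiff_subset_sdiff_of_inter_eq {Ω A S T : Finset α} (hS : S ⊆ Ω) (hT : T ⊆ Ω)
    (hST : S ∩ A = T ∩ A) : S ∆ T ⊆ Ω \ A := by
  intro x hx
  have hxA := congrArg (x ∈ ·) hST
  simp only [mem_inter, eq_iff_iff] at hxA
  rw [mem_symmDiff] at hx
  rw [mem_sdiff]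
  exact ⟨hx.elim (hS ·.1) (hT ·.1), fun h => by tauto⟩

theorem half_mul_sub_le_sum_edgeWeight {Ω : Finset α} (hsub : ∀ S ∈ P, S ⊆ Ω) {δ : ℝ}
    (hδ : 0 ≤ δ) (hsep : ∀ S ∈ P, ∀ T ∈ P, S ≠ T → δ ≤ #(S ∆ T)) (A : Finset α) :
    δ / 2 * (#P - #(P.image (· ∩ A))) ≤ ∑ b ∈ Ω \ A, (edgeWeight P (insert b A) b : ℝ) := by
  calc δ / 2 * (#P - #(P.image (· ∩ A)))
      = ∑ C ∈ P.image (· ∩ A), δ / 2 * (#(traceClass P A C) - 1) := by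
        rw [← mul_sum, sum_sub_distrib, ← Nat.cast_sum, sum_card_traceClass, sum_const,
          nsmul_eq_mul, mul_one]
    _ ≤ ∑ C ∈ P.image (· ∩ A), ∑ b ∈ Ω \ A,
          (min #{S ∈ traceClass P A C | b ∉ S} #{S ∈ traceClass P A C | b ∈ S} : ℝ) := by
        refine sum_le_sum fun C _ => half_mul_card_sub_one_le_sum_min hδ _ ?_ ?_
        · intro S hS T hT
          obtain ⟨hS, hSC⟩ := mem_filter.1 hS
          obtain ⟨hT, hTC⟩ := mem_filter.1 hT
          exact symmDiff_subset_sdiff_of_inter_eq (hsub S hS) (hsub T hT) (hSC.trans hTC.symm)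
        · exact fun S hS T hT => hsep S (mem_filter.1 hS).1 T (mem_filter.1 hT).1
    _ = ∑ b ∈ Ω \ A, ∑ C ∈ P.image (· ∩ A),
          (min #{S ∈ traceClass P A C | b ∉ S} #{S ∈ traceClass P A C | b ∈ S} : ℝ) := sum_comm
    _ ≤ ∑ b ∈ Ω \ A, (edgeWeight P (insert b A) b : ℝ) := by
        gcongr with b hb
        exact_mod_cast sum_min_card_traceClass_le_edgeWeight (mem_sdiff.1 hb).2

theorem haussler_inequality {Ω : Finset α} (hsub : ∀ S ∈ P, S ⊆ Ω) (h : VCDimLE P d) {δ : ℝ}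
    (hδ : 0 ≤ δ) (hsep : ∀ S ∈ P, ∀ T ∈ P, S ≠ T → δ ≤ #(S ∆ T)) {k : ℕ} (hk : k ≤ #Ω) :
    δ * (k + 1) * (#P - (k + 1) ^ d) ≤ 2 * d * #Ω * #P := by
  have lower : ∀ A ∈ Ω.powersetCard k,
      δ / 2 * (#P - (k + 1) ^ d) ≤ ∑ b ∈ Ω \ A, (edgeWeight P (insert b A) b : ℝ) := by
    intro A hA
    have htrace : #(P.image (· ∩ A)) ≤ (k + 1) ^ d := by
      have := card_le_succ_pow_of_vcDimLE (Ω := A)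
        (fun C hC => by obtain ⟨S, -, rfl⟩ := mem_image.1 hC; exact inter_subset_right)
        (h.image_inter A)
      rwa [(mem_powersetCard.1 hA).2] at this
    refine le_trans ?_ (half_mul_sub_le_sum_edgeWeight hsub hδ hsep A)
    gcongr
    exact_mod_cast htrace
  have upper : ∑ A ∈ Ω.powersetCard (k + 1), ∑ b ∈ A, edgeWeight P A b ≤
      (#Ω).choose (k + 1) * (d * #P) := by
    rw [← card_powersetCard, ← smul_eq_mul]
    exact sum_le_card_nsmul _ _ _ fun A _ => sum_edgeWeight_le h A
  have key : ((#Ω).choose k : ℝ) * (δ / 2 * (#P - (k + 1) ^ d)) ≤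
      (#Ω).choose (k + 1) * (d * #P) := by
    calc ((#Ω).choose k : ℝ) * (δ / 2 * (#P - (k + 1) ^ d))
        = ∑ A ∈ Ω.powersetCard k, δ / 2 * (#P - (k + 1) ^ d) := by
          rw [sum_const, card_powersetCard, nsmul_eq_mul]
      _ ≤ ∑ A ∈ Ω.powersetCard k, ∑ b ∈ Ω \ A, (edgeWeight P (insert b A) b : ℝ) :=
          sum_le_sum lower
      _ = ∑ A ∈ Ω.powersetCard (k + 1), ∑ b ∈ A, (edgeWeight P A b : ℝ) :=
          (sum_powersetCard_succ_sum Ω k fun A b => (edgeWeight P A b : ℝ)).symm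
      _ ≤ (#Ω).choose (k + 1) * (d * #P) := by exact_mod_cast upper
  have hchoose : ((#Ω).choose (k + 1) : ℝ) * (k + 1) ≤ (#Ω).choose k * #Ω := by
    have := (Nat.choose_succ_right_eq (#Ω) k).trans_le (Nat.mul_le_mul_left _ (Nat.sub_le _ k))
    exact_mod_cast this
  have hpos : (0 : ℝ) < (#Ω).choose k := by exact_mod_cast Nat.choose_pos hk
  have hscaled : ((#Ω).choose k : ℝ) * (δ / 2 * (#P - (k + 1) ^ d) * (k + 1)) ≤
      (#Ω).choose k * (d * #Ω * #P) := by
    calc ((#Ω).choose k : ℝ) * (δ / 2 * (#P - (k + 1) ^ d) * (k + 1))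
        = (#Ω).choose k * (δ / 2 * (#P - (k + 1) ^ d)) * (k + 1) := by ring
      _ ≤ (#Ω).choose (k + 1) * (d * #P) * (k + 1) := by gcongr
      _ = (#Ω).choose (k + 1) * (k + 1) * (d * #P) := by ring
      _ ≤ (#Ω).choose k * #Ω * (d * #P) := by gcongr
      _ = (#Ω).choose k * (d * #Ω * #P) := by ring
  linarith [le_of_mul_le_mul_left hscaled hpos]

/-- **Haussler's packing lemma** for a family of subsets of `Ω`. -/
theorem card_le_of_vcDimLE_of_separated {Ω : Finset α} (hsub : ∀ S ∈ P, S ⊆ Ω)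
    (h : VCDimLE P d) (hd : 1 ≤ d) {δ : ℝ} (hδ : 0 < δ) (hδΩ : δ ≤ #Ω)
    (hsep : ∀ S ∈ P, ∀ T ∈ P, S ≠ T → δ ≤ #(S ∆ T)) :
    (#P : ℝ) ≤ 2 * (5 * d) ^ d * (#Ω / δ) ^ d := by
  have hd' : (1 : ℝ) ≤ d := by exact_mod_cast hd
  set s := ⌈4 * d * #Ω / δ⌉₊
  have hs_pos : 0 < s := Nat.ceil_pos.2 (by have : (0 : ℝ) < #Ω := hδ.trans_le hδΩ; positivity)
  have hs_ge : 4 * d * #Ω ≤ δ * s := by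
    rw [mul_comm δ, ← div_le_iff₀ hδ]
    exact Nat.le_ceil _
  have hs_le : (s : ℝ) ≤ 5 * d * #Ω / δ := by
    have h1 : (s : ℝ) < 4 * d * #Ω / δ + 1 := Nat.ceil_lt_add_one (by positivity)
    have h2 : 1 ≤ d * #Ω / δ := by rw [le_div_iff₀ hδ]; nlinarith
    have h3 : 5 * d * #Ω / δ = 4 * d * #Ω / δ + d * #Ω / δ := by ring
    linarith
  have hP : (#P : ℝ) ≤ 2 * s ^ d := by
    rcases lt_or_ge #Ω s with hΩs | hsΩ
    · have : #P ≤ s ^ d := (card_le_succ_pow_of_vcDimLE hsub h).trans (Nat.pow_le_pow_left hΩs d)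
      have : (#P : ℝ) ≤ s ^ d := by exact_mod_cast this
      linarith [pow_nonneg (Nat.cast_nonneg s : (0 : ℝ) ≤ s) d]
    · obtain ⟨k, hk⟩ := Nat.exists_eq_add_one_of_ne_zero hs_pos.ne'
      have hin := haussler_inequality hsub h hδ.le hsep (k := k) (by omega)
      rw [← Nat.cast_add_one, ← hk] at hin
      have hδs : 0 < δ * s := by positivity
      nlinarith [mul_le_mul_of_nonneg_right hs_ge (Nat.cast_nonneg #P : (0 : ℝ) ≤ #P)]
  calc (#P : ℝ) ≤ 2 * s ^ d := hP
    _ ≤ 2 * (5 * d * #Ω / δ) ^ d := by gcongr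
    _ = 2 * (5 * d) ^ d * (#Ω / δ) ^ d := by
          rw [mul_assoc 2, ← mul_pow, ← mul_div_assoc]

end Haussler

lemma crossCount_eq_card_symmDiff [DecidableEq α] (F : Finset (Finset α)) (u v : α) :
    crossCount F u v = #({A ∈ F | u ∈ A} ∆ {A ∈ F | v ∈ A}) := by
  unfold crossCount
  congr 1
  ext A
  simp only [mem_filter, mem_symmDiff]
  tauto

/-- Haussler's packing lemma, dual form: for every `d ≥ 1` there is a constant
`c₁ = c₁(d)` such that if `F` has dual VC-dimension at most `d` and `X` is
`δ`-separated (with `1 ≤ δ ≤ |F|`), then `|X| ≤ c₁·(|F|/δ)^d`. -/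
theorem haussler_packing (d : ℕ) (hd : 1 ≤ d) :
    ∃ c₁ : ℝ, 0 < c₁ ∧
      ∀ (n : ℕ) (F : Finset (Finset (Fin n))) (δ : ℝ) (X : Finset (Fin n)),
        1 ≤ δ → δ ≤ (F.card : ℝ) → DualVCDimLE F d → Separated F δ X →
        (X.card : ℝ) ≤ c₁ * ((F.card : ℝ) / δ) ^ d := by
  refine ⟨2 * (5 * d) ^ d, by positivity, fun n F δ X hδ hδF hF hX => ?_⟩
  set dual : Fin n → Finset (Finset (Fin n)) := fun v => {A ∈ F | v ∈ A}
  have hsep : ∀ u ∈ X, ∀ v ∈ X, u ≠ v → δ ≤ #(dual u ∆ dual v) := fun u hu v hv huv => by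
    simpa only [crossCount_eq_card_symmDiff] using hX u hu v hv huv
  have hinj : Set.InjOn dual X := fun u hu v hv huv => by
    by_contra hne
    have := hsep u hu v hv hne
    rw [huv, symmDiff_self, bot_eq_empty, card_empty, Nat.cast_zero] at this
    linarith
  rw [← card_image_of_injOn hinj]
  refine card_le_of_vcDimLE_of_separated (fun S hS => ?_) (VCDimLE.mono hF ?_) hd
    (by linarith) hδF ?_
  · obtain ⟨v, -, rfl⟩ := mem_image.1 hS
    exact filter_subset _ _
  · exact image_subset_image (subset_univ X)
  · simp only [mem_image]
    rintro _ ⟨u, hu, rfl⟩ _ ⟨v, hv, rfl⟩ hne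
    exact hsep u hu v hv fun h => hne (h ▸ rfl)
end

section
/- For every d ≥ 2 and m ≥ 1, r_d(3;m) ≥ 2^m + 1; moreover the recursive two-block construction yields an m-coloring of the edges of K_{2^m} with no monochromatic triangle whose set system of monochromatic neighborhoods has dual VC-dimension at most 2. -/
open Finset

variable {α : Type*}

/-- The neighborhood of `v` in color `i` with respect to the edge-coloring `χ` of `K_n`. -/
def monoNbhd {n m : ℕ} (χ : Fin n → Fin n → Fin m) (i : Fin m) (v : Fin n) :
    Finset (Fin n) :=
  Finset.univ.filter (fun u => u ≠ v ∧ χ u v = i)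

/-- The set system `F = {N_{q_i}(v) : i ∈ [m], v ∈ V}` of all monochromatic
neighborhoods of the coloring `χ`. -/
def colorSystem {n m : ℕ} (χ : Fin n → Fin n → Fin m) : Finset (Finset (Fin n)) :=
  Finset.univ.image (fun p : Fin m × Fin n => monoNbhd χ p.1 p.2)

/-- The coloring `χ` contains a monochromatic clique of size `k` in color `i`. -/
def HasMonoClique {n m : ℕ} (χ : Fin n → Fin n → Fin m) (i : Fin m) (k : ℕ) : Prop :=
  ∃ S : Finset (Fin n), S.card = k ∧ ∀ u ∈ S, ∀ v ∈ S, u ≠ v → χ u v = i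

/-!
Colour the edge `uv` of `K_{2^m}` by the position of the highest bit in which `u` and `v`
differ; this is the recursive two-block construction written in closed form. Then `u` is a
colour-`i` neighbour of `v` exactly when `⌊u / 2^i⌋ = ⌊v / 2^i⌋ xor 1`, so every monochromatic
neighbourhood is a dyadic block. Three vertices pairwise joined in colour `i` would need three
level-`i` blocks that are pairwise siblings, which is impossible, and dyadic blocks form a
laminar family, whose dual system cannot shatter two sets: a point of `X ∩ Y` together with a
point of the smaller set missing the larger one is a contradiction.
-/

def IsLaminar (F : Finset (Finset α)) : Prop :=
  ∀ A ∈ F, ∀ B ∈ F, ¬ Disjoint A B → A ⊆ B ∨ B ⊆ A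

section DualSystem

variable {V : Type*} [Fintype V] [DecidableEq V]

lemma SysShatters.exists_dualSystem_point {F S B : Finset (Finset V)}
    (hS : SysShatters (dualSystem F) S) (hB : B ⊆ S) :
    ∃ v, ∀ A ∈ S, A ∈ B ↔ A ∈ F ∧ v ∈ A := by
  obtain ⟨_, hA, hAS⟩ := hS B hB
  obtain ⟨v, -, rfl⟩ := mem_image.mp hA
  refine ⟨v, fun A hA => ?_⟩
  rw [← hAS]
  simp [hA]

lemma DualVCDimLE.mono {F : Finset (Finset V)} {d e : ℕ} (h : DualVCDimLE F d) (hde : d ≤ e) :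
    DualVCDimLE F e :=
  fun S hS => (h S hS).trans hde

lemma IsLaminar.dualVCDimLE_one {F : Finset (Finset V)} (hF : IsLaminar F) :
    DualVCDimLE F 1 := by
  intro S hS
  by_contra! hcard
  have not_subset : ∀ X ∈ S, ∀ Y ∈ S, X ≠ Y → Y ∈ F → ¬ X ⊆ Y := by
    intro X hX Y hY hXY hYF hsub
    obtain ⟨w, hw⟩ := hS.exists_dualSystem_point (singleton_subset_iff.mpr hX)
    have hwX : w ∈ X := ((hw X hX).mp (mem_singleton_self X)).2
    exact hXY ((mem_singleton.mp ((hw Y hY).mpr ⟨hYF, hsub hwX⟩)).symm)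
  obtain ⟨X, hX, Y, hY, hXY⟩ := one_lt_card.mp hcard
  obtain ⟨v, hv⟩ := hS.exists_dualSystem_point (insert_subset hX (singleton_subset_iff.mpr hY))
  obtain ⟨hXF, hvX⟩ := (hv X hX).mp (by simp)
  obtain ⟨hYF, hvY⟩ := (hv Y hY).mp (by simp)
  rcases hF X hXF Y hYF (not_disjoint_iff.mpr ⟨v, hvX, hvY⟩) with hsub | hsub
  · exact not_subset X hX Y hY hXY hYF hsub
  · exact not_subset Y hY X hX hXY.symm hXF hsub

end DualSystem

lemma Nat.div_eq_div_of_div_eq_of_dvd {a b n k : ℕ} (h : a / n = b / n) (hnk : n ∣ k) :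
    a / k = b / k := by
  obtain ⟨c, rfl⟩ := hnk
  rw [← Nat.div_div_eq_div_mul, ← Nat.div_div_eq_div_mul, h]

lemma Nat.div_two_pow_eq_one_iff {x i : ℕ} : x / 2 ^ i = 1 ↔ x ≠ 0 ∧ x.log2 = i := by
  rcases eq_or_ne x 0 with rfl | hx
  · simp
  rw [Nat.log2_eq_iff hx, Nat.div_eq_iff (by positivity), pow_succ]
  omega

lemma Nat.ne_and_log2_xor_eq_iff {u v i : ℕ} :
    u ≠ v ∧ (u ^^^ v).log2 = i ↔ u / 2 ^ i = v / 2 ^ i ^^^ 1 := by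
  rw [← xor_eq_iff_right_eq, ← Nat.xor_div_two_pow, Nat.div_two_pow_eq_one_iff, Nat.xor_comm,
    Ne, Ne, Nat.xor_eq_zero_iff, eq_comm (a := v)]

section BitColor

variable {m : ℕ} [NeZero m]

/-- The diagonal gets the junk colour `0`. -/
def bitColor (u v : Fin (2 ^ m)) : Fin m :=
  ⟨(u.val ^^^ v.val).log2, by
    rcases eq_or_ne (u.val ^^^ v.val) 0 with h | h
    · rw [h]
      exact Nat.pos_of_neZero m
    · exact (Nat.log2_lt h).mpr (Nat.xor_lt_two_pow u.isLt v.isLt)⟩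

lemma bitColor_comm (u v : Fin (2 ^ m)) : bitColor u v = bitColor v u := by
  simp only [bitColor, Nat.xor_comm]

lemma ne_and_bitColor_eq_iff {u v : Fin (2 ^ m)} {i : Fin m} :
    u ≠ v ∧ bitColor u v = i ↔ u.val / 2 ^ (i : ℕ) = v.val / 2 ^ (i : ℕ) ^^^ 1 := by
  rw [← Nat.ne_and_log2_xor_eq_iff, bitColor, Fin.ext_iff, Fin.val_ne_iff]

lemma mem_monoNbhd_bitColor {u v : Fin (2 ^ m)} {i : Fin m} :
    u ∈ monoNbhd bitColor i v ↔ u.val / 2 ^ (i : ℕ) = v.val / 2 ^ (i : ℕ) ^^^ 1 := by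
  simp only [monoNbhd, mem_filter, mem_univ, true_and, ne_and_bitColor_eq_iff]

lemma monoNbhd_bitColor_subset_of_le {i j : Fin m} {v w x : Fin (2 ^ m)} (hij : i ≤ j)
    (hxv : x ∈ monoNbhd bitColor i v) (hxw : x ∈ monoNbhd bitColor j w) :
    monoNbhd bitColor i v ⊆ monoNbhd bitColor j w := by
  intro u hu
  rw [mem_monoNbhd_bitColor] at hu hxv hxw ⊢
  rw [Nat.div_eq_div_of_div_eq_of_dvd (hu.trans hxv.symm) (pow_dvd_pow 2 hij), hxw]

lemma isLaminar_colorSystem_bitColor : IsLaminar (colorSystem (bitColor (m := m))) := by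
  rintro _ hX _ hY hXY
  obtain ⟨⟨i, v⟩, -, rfl⟩ := mem_image.mp hX
  obtain ⟨⟨j, w⟩, -, rfl⟩ := mem_image.mp hY
  obtain ⟨x, hxv, hxw⟩ := not_disjoint_iff.mp hXY
  rcases le_total i j with hij | hji
  · exact Or.inl (monoNbhd_bitColor_subset_of_le hij hxv hxw)
  · exact Or.inr (monoNbhd_bitColor_subset_of_le hji hxw hxv)

lemma not_hasMonoClique_bitColor_three (i : Fin m) : ¬ HasMonoClique bitColor i 3 := by
  rintro ⟨S, hcard, hS⟩
  obtain ⟨a, b, c, hab, hac, hbc, rfl⟩ := card_eq_three.mp hcard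
  have hab' := ne_and_bitColor_eq_iff.mp ⟨hab, hS a (by simp) b (by simp) hab⟩
  have hbc' := ne_and_bitColor_eq_iff.mp ⟨hbc, hS b (by simp) c (by simp) hbc⟩
  have hac' := ne_and_bitColor_eq_iff.mp ⟨hac, hS a (by simp) c (by simp) hac⟩
  rw [hbc', xor_cancel_right] at hab'
  rw [hab'] at hac'
  exact one_ne_zero (xor_left_eq_self_iff.mp hac'.symm)

end BitColor

/-- For every `d ≥ 2` and `m ≥ 1`, `r_d(3;m) ≥ 2^m + 1`: there is an `m`-coloring of the
edges of the complete graph on `2^m` vertices with no monochromatic triangle whose set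
system of monochromatic neighborhoods has dual VC-dimension at most `2` (hence at most
`d`). -/
theorem ramsey_lower_bound_dual_vc (d m : ℕ) (hd : 2 ≤ d) (hm : 1 ≤ m) :
    ∃ χ : Fin (2 ^ m) → Fin (2 ^ m) → Fin m,
      (∀ u v, χ u v = χ v u) ∧
      (¬ ∃ i : Fin m, HasMonoClique χ i 3) ∧
      DualVCDimLE (colorSystem χ) 2 ∧
      DualVCDimLE (colorSystem χ) d := by
  have : NeZero m := ⟨by omega⟩
  have hVC : DualVCDimLE (colorSystem (bitColor (m := m))) 1 :=
    isLaminar_colorSystem_bitColor.dualVCDimLE_one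
  exact ⟨bitColor, bitColor_comm, fun ⟨i, hi⟩ => not_hasMonoClique_bitColor_three i hi,
    hVC.mono (by norm_num), hVC.mono (by omega)⟩
end

section
/- (Erdős–Hajnal for hereditary families, weak form used) There is a constant ε > 0 depending only on d such that every graph on n vertices with VC-dimension at most d contains a clique or an independent set of size at least e^{ε√(log n)}. -/
/-- A finset `S` is shattered by the set system `F`. -/
def ShattersSet {α : Type*} (F : Set (Set α)) (S : Finset α) : Prop :=
  ∀ B ⊆ S, ∃ A ∈ F, A ∩ (S : Set α) = (B : Set α)

/-- The set system `F` has VC-dimension at most `d`. -/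
def VCDimSetLE {α : Type*} (F : Set (Set α)) (d : ℕ) : Prop :=
  ∀ S : Finset α, ShattersSet F S → S.card ≤ d

/-!
The neighbourhoods of `G` shatter no `(d + 1)`-set, so `G` has no induced copy of the incidence
graph `H` between a `(d + 1)`-set and its subsets; let `k = |V(H)|`. In an `H`-free graph, a greedy
embedding of `H` into `k` disjoint parts of a vertex set `W` must get stuck, which produces disjoint
`A, B ⊆ W` of size at least `β |W|`, `β = θ^k / (2k²)`, such that every vertex of `A` has fewer
than `θ |B|` neighbours in `B`, or fewer than `θ |B|` non-neighbours there. In the sparse case,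
take a clique `K` and an independent set `I` in `A` recursively; if `|I| ≤ 2T` with `θ = 1/(4T)`,
at least half of `B` has no neighbour in `I`, and recursing there doubles `|K| |I|`. This gives
`|K| |I| ≥ min (T, |W|^δ)` with `(β/2)^δ = 1/2`, and for `T = t²`, `t = exp (ε √(log n))` and `ε`
small enough in terms of `k`, `n^δ ≥ T`, so `|K| ≥ t` or `|I| ≥ t`.
-/

open Finset Function Real

theorem Finset.exists_pairwise_disjoint_card_eq {α : Type*} (W : Finset α) {k c : ℕ}
    (h : k * c ≤ #W) :
    ∃ P : Fin k → Finset α, (∀ i, P i ⊆ W) ∧ Pairwise (Disjoint on P) ∧ ∀ i, #(P i) = c := by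
  obtain ⟨e⟩ : Nonempty (Fin k × Fin c ↪ W) :=
    Function.Embedding.nonempty_of_card_le (by simpa using h)
  let P (i : Fin k) : Finset α :=
    univ.map ⟨fun j ↦ e (i, j), fun j j' h ↦ by simpa using e.injective (Subtype.ext h)⟩
  refine ⟨P, fun i x hx ↦ ?_, fun i i' hii' ↦ ?_, fun i ↦ by simp [P]⟩
  · obtain ⟨j, -, rfl⟩ := mem_map.mp hx
    exact (e (i, j)).2
  · refine (Finset.disjoint_left.mpr fun x hx hx' ↦ ?_ : Disjoint (P i) (P i'))
    obtain ⟨j, -, rfl⟩ := mem_map.mp hx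
    obtain ⟨j', -, hj'⟩ := mem_map.mp hx'
    exact hii' (congrArg Prod.fst (e.injective (Subtype.ext hj'))).symm

noncomputable def pairDensity (k : ℕ) (θ : ℝ) : ℝ := θ ^ k / (2 * k ^ 2)

namespace SimpleGraph

open scoped Classical

variable {V : Type*}

def incidenceRel (α : Type*) : α ⊕ Finset α → α ⊕ Finset α → Prop
  | .inl a, .inr s => a ∈ s
  | _, _ => False

def incidenceGraph (α : Type*) : SimpleGraph (α ⊕ Finset α) := fromRel (incidenceRel α)

@[simp] lemma incidenceGraph_adj_inr_inl {α : Type*} (s : Finset α) (a : α) :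
    (incidenceGraph α).Adj (.inr s) (.inl a) ↔ a ∈ s := by
  simp [incidenceGraph, incidenceRel]

theorem not_incidenceGraph_isIndContained {α : Type*} [Fintype α]
    {G : SimpleGraph V} {d : ℕ} (hG : VCDimSetLE (Set.range G.neighborSet) d)
    (hα : d < Fintype.card α) : ¬ incidenceGraph α ⊴ G := by
  rintro ⟨f⟩
  let S : Finset V := univ.map (Function.Embedding.inl.trans f.toEmbedding)
  have hS : ShattersSet (Set.range G.neighborSet) S := by
    intro B hB
    refine ⟨_, ⟨f (.inr ({a | f (.inl a) ∈ B} : Finset α)), rfl⟩, ?_⟩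
    ext v
    simp only [Set.mem_inter_iff, mem_neighborSet, mem_coe]
    constructor
    · rintro ⟨hadj, hv⟩
      obtain ⟨a, -, rfl⟩ := mem_map.mp hv
      simpa using f.map_adj_iff.mp hadj
    · intro hv
      obtain ⟨a, -, rfl⟩ := mem_map.mp (hB hv)
      exact ⟨f.map_adj_iff.mpr (by simpa using hv), hB hv⟩
  have := hG S hS
  simp [S] at this
  omega

def IsSparsePair (G : SimpleGraph V) (θ : ℝ) (A B : Finset V) : Prop :=
  ∀ x ∈ A, (#{y ∈ B | G.Adj x y} : ℝ) < θ * #B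

-- For disjoint `A` and `B`, `Gᶜ.IsSparsePair θ A B` says that every vertex of `A` has fewer than
-- `θ |B|` non-neighbours in `B`.
def HasSparseOrDensePair (G : SimpleGraph V) (θ b : ℝ) (W : Finset V) : Prop :=
  ∃ A B : Finset V, A ⊆ W ∧ B ⊆ W ∧ Disjoint A B ∧ b ≤ #A ∧ b ≤ #B ∧
    (G.IsSparsePair θ A B ∨ Gᶜ.IsSparsePair θ A B)

theorem exists_forall_le_card_adj {ι : Type*} [Fintype ι] {G : ι → SimpleGraph V} {θ b : ℝ}
    (A : Finset V) (B : ι → Finset V)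
    (hG : ∀ i A', A' ⊆ A → b ≤ #A' → ¬ (G i).IsSparsePair θ A' (B i))
    (hA : (Fintype.card ι + 1) * b ≤ #A) (hb : 0 < b) :
    ∃ x ∈ A, ∀ i, θ * #(B i) ≤ #{y ∈ B i | (G i).Adj x y} := by
  by_contra! h
  let bad (i : ι) : Finset V := {x ∈ A | (#{y ∈ B i | (G i).Adj x y} : ℝ) < θ * #(B i)}
  have hbad (i : ι) : (#(bad i) : ℝ) < b :=
    lt_of_not_ge fun hle ↦ hG i _ (filter_subset _ _) hle fun x hx ↦ (mem_filter.mp hx).2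
  have hcover : A ⊆ univ.biUnion bad := fun x hx ↦ by
    obtain ⟨i, hi⟩ := h x hx
    exact mem_biUnion.mpr ⟨i, mem_univ _, mem_filter.mpr ⟨hx, hi⟩⟩
  have : (#A : ℝ) ≤ Fintype.card ι * b := calc
    (#A : ℝ) ≤ ∑ i, (#(bad i) : ℝ) := by exact_mod_cast (card_le_card hcover).trans card_biUnion_le
    _ ≤ ∑ _i : ι, b := sum_le_sum fun i _ ↦ (hbad i).le
    _ = Fintype.card ι * b := by simp
  linarith

def Embedding.finCons {G : SimpleGraph V} {k : ℕ} {H : SimpleGraph (Fin (k + 1))}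
    (f : H.comap Fin.succ ↪g G) (x : V) (hx : ∀ j, f j ≠ x)
    (hadj : ∀ j, G.Adj x (f j) ↔ H.Adj 0 j.succ) : H ↪g G where
  toFun := Fin.cons x f
  inj' := Fin.cons_injective_iff.mpr ⟨fun ⟨j, hj⟩ ↦ hx j hj, f.injective⟩
  map_rel_iff' {a b} := by
    cases a using Fin.cases <;> cases b using Fin.cases
    · simp
    · simpa using hadj _
    · simpa [G.adj_comm, H.adj_comm] using hadj _
    · simp

theorem exists_embedding_of_not_hasSparseOrDensePair {G : SimpleGraph V} {θ b : ℝ}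
    (hθ₀ : 0 ≤ θ) (hθ₁ : θ ≤ 1) (hb : 0 < b) {W : Finset V}
    (hW : ¬ G.HasSparseOrDensePair θ b W) :
    ∀ {k : ℕ} (H : SimpleGraph (Fin k)) (C : Fin k → Finset V), (∀ j, C j ⊆ W) →
      Pairwise (Disjoint on C) → (∀ j, k * b ≤ θ ^ k * #(C j)) → ∃ f : H ↪g G, ∀ j, f j ∈ C j
  | 0, H, _, _, _, _ => ⟨(IsIndContained.of_isEmpty : H ⊴ G).some, fun j ↦ j.elim0⟩
  | k + 1, H, C, hCW, hC, hsize => by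
    have hCk (j) : (k + 1) * b ≤ #(C j) := calc
      (k + 1) * b ≤ θ ^ (k + 1) * #(C j) := mod_cast hsize j
      _ ≤ #(C j) := mul_le_of_le_one_left (by positivity) (pow_le_one₀ hθ₀ hθ₁)
    have hCb (j) : b ≤ #(C j) := le_trans (by nlinarith) (hCk j)
    -- The image `x` of `0` must be `G' j`-adjacent to the image of `j.succ`.
    let G' (j : Fin k) : SimpleGraph V := if H.Adj 0 j.succ then G else Gᶜ
    obtain ⟨x, hx, hgood⟩ := exists_forall_le_card_adj (G := G') (θ := θ) (C 0)
      (fun j ↦ C j.succ) (fun j A hA hbA hsp ↦ hW ⟨A, C j.succ, hA.trans (hCW 0), hCW _,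
        (hC (Fin.succ_ne_zero j).symm).mono_left hA, hbA, hCb _, by
          unfold G' at hsp; split_ifs at hsp <;> simp [hsp]⟩)
      (by simpa using hCk 0) hb
    let C' (j : Fin k) : Finset V := {y ∈ C j.succ | (G' j).Adj x y}
    obtain ⟨f, hf⟩ := exists_embedding_of_not_hasSparseOrDensePair hθ₀ hθ₁ hb hW
      (H.comap Fin.succ) C' (fun j ↦ (filter_subset _ _).trans (hCW _))
      (fun i j hij ↦ (hC (Fin.succ_injective _ |>.ne hij)).mono (filter_subset _ _)
        (filter_subset _ _))
      (fun j ↦ calc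
        (k : ℝ) * b ≤ (k + 1) * b := by nlinarith
        _ ≤ θ ^ k * (θ * #(C j.succ)) := by simpa [pow_succ, mul_assoc] using hsize j.succ
        _ ≤ θ ^ k * #(C' j) := mul_le_mul_of_nonneg_left (hgood j) (by positivity))
    have hxf (j) : G.Adj x (f j) ↔ H.Adj 0 j.succ := by
      have := (mem_filter.mp (hf j)).2
      unfold G' at this; split_ifs at this with h <;> simp_all [compl_adj]
    refine ⟨Embedding.finCons f x (fun j h ↦ ?_) hxf, fun j ↦ ?_⟩
    · exact (G' j).irrefl (h ▸ (mem_filter.mp (hf j)).2)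
    · cases j using Fin.cases
      · exact hx
      · exact (mem_filter.mp (hf _)).1


theorem card_pos_of_not_isIndContained {U : Type*} [Fintype U] {H : SimpleGraph U}
    {G : SimpleGraph V} (hH : ¬ H ⊴ G) :
    0 < Fintype.card U :=
  Fintype.card_pos_iff.mpr (not_isEmpty_iff.mp fun _ ↦ hH .of_isEmpty)

theorem hasSparseOrDensePair_of_not_isIndContained {U : Type*} [Fintype U] {H : SimpleGraph U}
    {G : SimpleGraph V} (hH : ¬ H ⊴ G) {θ : ℝ} (hθ₀ : 0 < θ) (hθ₁ : θ ≤ 1) {W : Finset V}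
    (hW : Fintype.card U ≤ #W) :
    G.HasSparseOrDensePair θ (pairDensity (Fintype.card U) θ * #W) W := by
  set k := Fintype.card U
  have hk : 0 < k := card_pos_of_not_isIndContained hH
  set c := #W / k
  have hWc : (#W : ℝ) ≤ 2 * k * c := by
    have h₁ : #W < k * (c + 1) := Nat.lt_mul_div_succ #W hk
    have h₂ : 1 ≤ c := Nat.div_pos hW hk
    exact_mod_cast (by nlinarith : #W ≤ 2 * k * c)
  obtain ⟨P, hPW, hP, hPc⟩ := W.exists_pairwise_disjoint_card_eq (Nat.mul_div_le #W k)
  by_contra hno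
  obtain ⟨f, -⟩ := exists_embedding_of_not_hasSparseOrDensePair hθ₀.le hθ₁
    (by unfold pairDensity; have : 0 < #W := hk.trans_le hW; positivity) hno
    (H.overFin rfl) P hPW hP fun j ↦ calc
      (k : ℝ) * (pairDensity k θ * #W) = θ ^ k * (#W / (2 * k)) := by
        unfold pairDensity; field_simp
      _ ≤ θ ^ k * #(P j) := by
        rw [hPc]; gcongr; rw [div_le_iff₀ (by positivity)]; linarith
  exact hH ⟨f.comp (overFinIso H rfl).toEmbedding⟩

variable (G : SimpleGraph V)

theorem exists_isClique_or_isIndepSet_min_two_le (W : Finset V) :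
    ∃ S ⊆ W, (G.IsClique (S : Set V) ∨ G.IsIndepSet (S : Set V)) ∧ min 2 #W ≤ #S := by
  rcases le_or_gt #W 1 with hW | hW
  · exact ⟨W, subset_refl _, .inl (.of_subsingleton fun a ha b hb ↦ card_le_one_iff.mp hW ha hb),
      min_le_right _ _⟩
  obtain ⟨u, hu, v, hv, huv⟩ := one_lt_card.mp hW
  refine ⟨{u, v}, by simp [insert_subset_iff, hu, hv], ?_, by simp [card_pair huv]⟩
  by_cases hadj : G.Adj u v
  · exact .inl (by simpa [isClique_pair] using fun _ ↦ hadj)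
  · exact .inr (by simpa [← isClique_compl, isClique_pair, huv] using hadj)

def HasCliqueIndepProduct (W : Finset V) (x : ℝ) : Prop :=
  ∃ K I : Finset V, K ⊆ W ∧ I ⊆ W ∧ G.IsClique (K : Set V) ∧ G.IsIndepSet (I : Set V) ∧
    x ≤ #K * #I

variable {G}

theorem HasCliqueIndepProduct.mono {W W' : Finset V} {x y : ℝ} (h : G.HasCliqueIndepProduct W x)
    (hW : W ⊆ W') (hyx : y ≤ x) : G.HasCliqueIndepProduct W' y :=
  let ⟨K, I, hK, hI, hKc, hIi, hx⟩ := h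
  ⟨K, I, hK.trans hW, hI.trans hW, hKc, hIi, hyx.trans hx⟩

@[simp] theorem hasCliqueIndepProduct_compl {W : Finset V} {x : ℝ} :
    Gᶜ.HasCliqueIndepProduct W x ↔ G.HasCliqueIndepProduct W x := by
  constructor <;> rintro ⟨K, I, hK, hI, hKc, hIi, hx⟩ <;>
    exact ⟨I, K, hI, hK, by simpa using hIi, by simpa using hKc, by linarith⟩

theorem IsClique.hasCliqueIndepProduct_card {S : Finset V} (hS : G.IsClique (S : Set V)) :
    G.HasCliqueIndepProduct S #S := by
  rcases S.eq_empty_or_nonempty with rfl | ⟨v, hv⟩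
  · exact ⟨∅, ∅, subset_refl _, subset_refl _, by simp, by simp, by simp⟩
  · exact ⟨S, {v}, subset_refl _, by simpa using hv, hS, by simp, by simp⟩

theorem IsIndepSet.hasCliqueIndepProduct_card {S : Finset V} (hS : G.IsIndepSet (S : Set V)) :
    G.HasCliqueIndepProduct S #S :=
  hasCliqueIndepProduct_compl.mp (IsClique.hasCliqueIndepProduct_card (by simpa using hS))

theorem hasCliqueIndepProduct_min_two (W : Finset V) :
    G.HasCliqueIndepProduct W (min 2 #W) := by
  obtain ⟨S, hSW, hS, hcard⟩ := G.exists_isClique_or_isIndepSet_min_two_le W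
  rcases hS with hS | hS
  · exact hS.hasCliqueIndepProduct_card.mono hSW (mod_cast hcard)
  · exact hS.hasCliqueIndepProduct_card.mono hSW (mod_cast hcard)

theorem IsSparsePair.card_le_two_mul_card_filter {θ : ℝ} {A B I : Finset V}
    (hsp : G.IsSparsePair θ A B) (hI : I ⊆ A) (hθI : 2 * θ * #I ≤ 1) :
    (#B : ℝ) ≤ 2 * #{y ∈ B | ∀ u ∈ I, ¬ G.Adj u y} := by
  have hcover : {y ∈ B | ¬ ∀ u ∈ I, ¬ G.Adj u y} ⊆ I.biUnion fun u ↦ {y ∈ B | G.Adj u y} := by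
    intro y hy
    simp only [mem_filter, not_forall, not_not] at hy
    obtain ⟨hyB, u, hu, hadj⟩ := hy
    exact mem_biUnion.mpr ⟨u, hu, mem_filter.mpr ⟨hyB, hadj⟩⟩
  have hrest : (#{y ∈ B | ¬ ∀ u ∈ I, ¬ G.Adj u y} : ℝ) ≤ #I * (θ * #B) := calc
    _ ≤ ∑ u ∈ I, (#{y ∈ B | G.Adj u y} : ℝ) := mod_cast (card_le_card hcover).trans card_biUnion_le
    _ ≤ ∑ _u ∈ I, θ * #B := sum_le_sum fun u hu ↦ (hsp u (hI hu)).le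
    _ = #I * (θ * #B) := by simp
  have hsplit : (#B : ℝ) = #{y ∈ B | ∀ u ∈ I, ¬ G.Adj u y} + #{y ∈ B | ¬ ∀ u ∈ I, ¬ G.Adj u y} :=
    mod_cast (card_filter_add_card_filter_not _).symm
  nlinarith [(#B).cast_nonneg (α := ℝ)]

theorem HasCliqueIndepProduct.union_of_isSparsePair {θ T x : ℝ} {A B : Finset V}
    (hθ₀ : 0 ≤ θ) (hθT : 4 * θ * T ≤ 1) (hxT : x ≤ T) (hAB : Disjoint A B)
    (hsp : G.IsSparsePair θ A B) (hA : G.HasCliqueIndepProduct A x)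
    (hB : ∀ B' ⊆ B, (#B : ℝ) ≤ 2 * #B' → G.HasCliqueIndepProduct B' x) :
    G.HasCliqueIndepProduct (A ∪ B) (2 * x) := by
  obtain ⟨K, I, hKA, hIA, hK, hI, hx⟩ := hA
  rcases lt_or_ge (2 * T) #I with hIT | hIT
  · exact hI.hasCliqueIndepProduct_card.mono (hIA.trans subset_union_left)
      (by linarith)
  -- Since `I` is small and `(A, B)` is sparse, most of `B` has no neighbour in `I`.
  set B' := {y ∈ B | ∀ u ∈ I, ¬ G.Adj u y}
  have hB'B : B' ⊆ B := filter_subset _ _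
  obtain ⟨K', I', hK'B', hI'B', hK', hI', hx'⟩ :=
    hB B' hB'B (hsp.card_le_two_mul_card_filter hIA (by nlinarith))
  obtain ⟨K'', hK'', hKK'', hK'K''⟩ :
      ∃ K'', (K'' = K ∨ K'' = K') ∧ #K ≤ #K'' ∧ #K' ≤ #K'' := by
    rcases le_total #K #K' with h | h
    · exact ⟨K', .inr rfl, h, le_rfl⟩
    · exact ⟨K, .inl rfl, le_rfl, h⟩
  refine ⟨K'', I ∪ I', ?_, union_subset_union hIA (hI'B'.trans hB'B), ?_, ?_, ?_⟩
  · rcases hK'' with rfl | rfl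
    · exact hKA.trans subset_union_left
    · exact hK'B'.trans (hB'B.trans subset_union_right)
  · rcases hK'' with rfl | rfl <;> assumption
  · rw [coe_union, isIndepSet_iff, Set.pairwise_union]
    refine ⟨hI, hI', fun u hu y hy _ ↦ ?_⟩
    have hnadj := (mem_filter.mp (hI'B' hy)).2 u hu
    exact ⟨hnadj, fun h ↦ hnadj h.symm⟩
  · have hII' : Disjoint I I' := hAB.mono hIA (hI'B'.trans hB'B)
    rw [card_union_of_disjoint hII']
    push_cast
    calc 2 * x = x + x := by ring
      _ ≤ #K * #I + #K' * #I' := add_le_add hx hx'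
      _ ≤ #K'' * #I + #K'' * #I' := by gcongr
      _ = #K'' * (#I + #I') := by ring

theorem HasCliqueIndepProduct.union_of_isSparsePair_or {θ T x : ℝ} {A B : Finset V}
    (hθ₀ : 0 ≤ θ) (hθT : 4 * θ * T ≤ 1) (hxT : x ≤ T) (hAB : Disjoint A B)
    (hsp : G.IsSparsePair θ A B ∨ Gᶜ.IsSparsePair θ A B) (hA : G.HasCliqueIndepProduct A x)
    (hB : ∀ B' ⊆ B, (#B : ℝ) ≤ 2 * #B' → G.HasCliqueIndepProduct B' x) :
    G.HasCliqueIndepProduct (A ∪ B) (2 * x) := by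
  rcases hsp with hsp | hsp
  · exact hA.union_of_isSparsePair hθ₀ hθT hxT hAB hsp hB
  · simpa using (hasCliqueIndepProduct_compl.mpr hA).union_of_isSparsePair hθ₀ hθT hxT hAB hsp
      fun B' hB' h ↦ hasCliqueIndepProduct_compl.mpr (hB B' hB' h)

theorem hasCliqueIndepProduct_rpow_logb_of_card_le {N : ℝ} (hN : 2 ≤ N) {W : Finset V}
    (hW : #W ≤ N) : G.HasCliqueIndepProduct W (#W ^ logb N 2) := by
  have hδ₀ : 0 < logb N 2 := logb_pos (by linarith) one_lt_two
  have hδ₁ : logb N 2 ≤ 1 :=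
    (logb_le_logb_of_le (by linarith) two_pos hN).trans_eq (logb_self_eq_one (by linarith))
  refine (G.hasCliqueIndepProduct_min_two W).mono subset_rfl (le_min ?_ ?_)
  · calc (#W : ℝ) ^ logb N 2 ≤ N ^ logb N 2 := rpow_le_rpow (by positivity) hW hδ₀.le
      _ = 2 := rpow_logb (by linarith) (by linarith) two_pos
  · rcases (#W).eq_zero_or_pos with h | h
    · simp [h, zero_rpow hδ₀.ne']
    · exact rpow_le_self_of_one_le (mod_cast h) hδ₁

theorem hasCliqueIndepProduct_min_rpow {U : Type*} [Fintype U] {H : SimpleGraph U}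
    (hH : ¬ H ⊴ G) {T : ℝ} (hT : 1 ≤ 4 * T) (W : Finset V) :
    G.HasCliqueIndepProduct W
      (min T (#W ^ logb (2 / pairDensity (Fintype.card U) (4 * T)⁻¹) 2)) := by
  set k := Fintype.card U
  set θ := (4 * T)⁻¹
  set β := pairDensity k θ
  set δ := logb (2 / β) 2
  have hk : (1 : ℝ) ≤ k := mod_cast card_pos_of_not_isIndContained hH
  have hθ₀ : 0 < θ := by positivity
  have hθ₁ : θ ≤ 1 := inv_le_one_of_one_le₀ hT
  have hθT : 4 * θ * T = 1 := by unfold θ; field_simp [(by linarith : (0 : ℝ) < T).ne']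
  have hβ₀ : 0 < β := by unfold β pairDensity; positivity
  have hkβ : k * β ≤ 1 := by
    unfold β pairDensity
    rw [mul_div_assoc', div_le_one (by positivity)]
    nlinarith [pow_le_one₀ hθ₀.le hθ₁ (n := k)]
  have hkN : k ≤ 2 / β := by rw [le_div_iff₀ hβ₀]; linarith
  have hN : 2 ≤ 2 / β := by rw [le_div_iff₀ hβ₀]; nlinarith
  have hδ₀ : 0 < δ := logb_pos (by linarith) one_lt_two
  -- `δ` is chosen so that the two recursive calls on sets of size `β |W| / 2` balance out.
  have hhalf : (β / 2) ^ δ = 2⁻¹ := by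
    rw [← inv_div, inv_rpow (by positivity), rpow_logb (by positivity) (by linarith) two_pos]
  induction W using Finset.strongInduction with | H W ih =>
  rcases le_or_gt (#W : ℝ) (2 / β) with hW | hW
  · exact (hasCliqueIndepProduct_rpow_logb_of_card_le hN hW).mono subset_rfl
      (min_le_right _ _)
  obtain ⟨A, B, hAW, hBW, hAB, hA, hB, hsp⟩ :=
    hasSparseOrDensePair_of_not_isIndContained hH hθ₀ hθ₁ (W := W) (mod_cast hkN.trans hW.le)
  have hβW : 2 < β * #W := by rwa [div_lt_iff₀ hβ₀, mul_comm] at hW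
  have hssub {S R : Finset V} (hS : S ⊆ W) (hR : R ⊆ W) (hSR : Disjoint S R) (hRc : 0 < #R) :
      S ⊂ W :=
    let ⟨r, hr⟩ := card_pos.mp hRc
    hS.ssubset_of_not_subset fun h ↦ Finset.disjoint_left.mp hSR.symm hr (h (hR hr))
  set y := (β * #W / 2) ^ δ
  have hy {S : Finset V} (hSW : S ⊂ W) (hS : β * #W / 2 ≤ #S) :
      G.HasCliqueIndepProduct S (min T y) :=
    (ih S hSW).mono subset_rfl (min_le_min_left _ (rpow_le_rpow (by positivity) hS hδ₀.le))
  have hAB' := (hy (hssub hAW hBW hAB (mod_cast (by linarith : (0 : ℝ) < #B))) (by linarith))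
    |>.union_of_isSparsePair_or hθ₀.le hθT.le (min_le_left _ _) hAB hsp
      fun B' hB' hBB' ↦ hy (hssub (hB'.trans hBW) hAW (hAB.symm.mono_left hB')
        (mod_cast (by linarith : (0 : ℝ) < #A))) (by linarith)
  refine hAB'.mono (union_subset hAW hBW) ?_
  have hWy : (#W : ℝ) ^ δ = 2 * y := by
    simp only [y, mul_div_right_comm]
    rw [mul_rpow (by positivity) (by positivity), hhalf]; ring
  rw [hWy, mul_min_of_nonneg _ _ (zero_le_two : (0 : ℝ) ≤ 2)]
  exact min_le_min (by linarith) le_rfl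

end SimpleGraph

open SimpleGraph

theorem log_two_div_pairDensity {k : ℕ} (hk : k ≠ 0) {T : ℝ} (hT : 0 < T) :
    log (2 / pairDensity k (4 * T)⁻¹) = log (4 * k ^ 2) + k * log 4 + k * log T := by
  have : 2 / pairDensity k (4 * T)⁻¹ = 4 * k ^ 2 * (4 * T) ^ k := by
    unfold pairDensity; rw [inv_pow]; field_simp; norm_num
  rw [this, log_mul (by positivity) (by positivity), log_pow, log_mul (by norm_num) hT.ne']
  ring

theorem two_mul_mul_add_le_log_two_mul_sq {k ε s C : ℝ} (hε : 0 < ε) (hs : 0 ≤ s)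
    (hk : 8 * k * ε ^ 2 ≤ log 2) (hC : 4 * ε ^ 2 * C ≤ log 2 ^ 2) (hlarge : log 2 < ε * s) :
    2 * (ε * s) * (C + 2 * k * (ε * s)) ≤ log 2 * s ^ 2 := by
  have hquad : 4 * k * (ε * s) ^ 2 ≤ log 2 / 2 * s ^ 2 := by nlinarith [sq_nonneg s]
  -- `4 ε² C ≤ (log 2)² < ε s log 2` bounds the linear term, after dividing by `ε`.
  have hlin : 2 * (ε * s) * C ≤ log 2 / 2 * s ^ 2 := by
    have hlog : 0 < log 2 := log_pos one_lt_two
    have : ε * (4 * ε * C) ≤ ε * (s * log 2) := by nlinarith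
    have := le_of_mul_le_mul_left this hε
    nlinarith
  nlinarith

theorem exists_sq_exp_le_rpow_logb {k : ℕ} (hk : k ≠ 0) :
    ∃ ε > 0, ∀ n : ℕ, log 2 < ε * √(log n) →
      exp (ε * √(log n)) ^ 2 ≤ n ^ logb (2 / pairDensity k (4 * exp (ε * √(log n)) ^ 2)⁻¹) 2 := by
  set C := log (4 * k ^ 2) + k * log 4
  have hk1 : (1 : ℝ) ≤ k := mod_cast Nat.one_le_iff_ne_zero.mpr hk
  have hlog2 : 0 < log 2 := log_pos one_lt_two
  have hC : 0 < C := by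
    have : 0 < log (4 * (k : ℝ) ^ 2) := log_pos (by nlinarith)
    have : 0 < log (4 : ℝ) := log_pos (by norm_num)
    positivity
  set m := min (log 2 / (8 * k)) (log 2 ^ 2 / (4 * C))
  have hm : 0 < m := lt_min (by positivity) (by positivity)
  refine ⟨√m, sqrt_pos.mpr hm, fun n hlarge ↦ ?_⟩
  set ε := √m
  have hε : 0 < ε := sqrt_pos.mpr hm
  have hε₁ : 8 * k * ε ^ 2 ≤ log 2 := by
    rw [sq_sqrt hm.le, ← le_div_iff₀' (by positivity)]; exact min_le_left _ _
  have hε₂ : 4 * ε ^ 2 * C ≤ log 2 ^ 2 := by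
    rw [sq_sqrt hm.le, mul_comm 4, mul_assoc, ← le_div_iff₀ (by positivity)]; exact min_le_right _ _
  set s := √(log n)
  have hs : 0 < s := by nlinarith
  have hlogn : log n = s ^ 2 := (sq_sqrt (sqrt_pos.mp hs).le).symm
  have hn : (0 : ℝ) < n := Nat.cast_pos.mpr <| Nat.pos_of_ne_zero fun h ↦ by
    simp [h] at hlogn; nlinarith
  rw [le_rpow_iff_log_le (by positivity) hn, log_pow, log_exp,
    logb, log_two_div_pairDensity hk (by positivity), log_pow, log_exp, hlogn, div_mul_eq_mul_div,
    le_div_iff₀ (by positivity)]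
  push_cast
  nlinarith [two_mul_mul_add_le_log_two_mul_sq hε hs.le hε₁ hε₂ hlarge]

theorem le_or_le_of_sq_le_mul {t a b : ℝ} (ha : 0 ≤ a) (h : t ^ 2 ≤ a * b) : t ≤ a ∨ t ≤ b := by
  by_contra! hlt
  nlinarith

theorem exp_mul_sqrt_log_le_min_two {ε : ℝ} {n : ℕ} (hn : 1 ≤ n) (h : ε * √(log n) ≤ log 2) :
    exp (ε * √(log n)) ≤ min 2 (n : ℝ) := by
  have h2 : exp (ε * √(log n)) ≤ 2 := (exp_le_exp.mpr h).trans_eq (exp_log two_pos)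
  rcases hn.eq_or_lt with rfl | hn
  · simp
  · have : (2 : ℝ) ≤ n := mod_cast hn
    exact le_min h2 (h2.trans this)

/-- Erdős–Hajnal for graphs of bounded VC-dimension (weak form): there is `ε = ε(d) > 0`
such that every graph on `n ≥ 1` vertices whose neighborhood set system has VC-dimension
at most `d` contains a clique or an independent set of size at least `e^{ε√(log n)}`. -/
theorem erdos_hajnal_weak_bounded_vc (d : ℕ) :
    ∃ ε : ℝ, 0 < ε ∧
      ∀ (n : ℕ), 1 ≤ n → ∀ G : SimpleGraph (Fin n),
        VCDimSetLE (Set.range G.neighborSet) d →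
        ∃ S : Finset (Fin n),
          (G.IsClique ↑S ∨ ∀ u ∈ S, ∀ v ∈ S, u ≠ v → ¬ G.Adj u v) ∧
          Real.exp (ε * Real.sqrt (Real.log n)) ≤ (S.card : ℝ) := by
  obtain ⟨ε, hε, hT⟩ :=
    exists_sq_exp_le_rpow_logb (Fintype.card_ne_zero (α := Fin (d + 1) ⊕ Finset (Fin (d + 1))))
  refine ⟨ε, hε, fun n hn G hG ↦ ?_⟩
  have hH := not_incidenceGraph_isIndContained hG (α := Fin (d + 1)) (by simp)
  rcases le_or_gt (ε * √(log n)) (log 2) with hsmall | hlarge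
  · obtain ⟨S, -, hS, hcard⟩ := G.exists_isClique_or_isIndepSet_min_two_le univ
    exact ⟨S, hS, (exp_mul_sqrt_log_le_min_two hn hsmall).trans (by simpa using hcard)⟩
  · have ht : 1 ≤ exp (ε * √(log n)) := one_le_exp (by positivity)
    obtain ⟨K, I, -, -, hK, hI, hKI⟩ :=
      (hasCliqueIndepProduct_min_rpow hH (T := exp (ε * √(log n)) ^ 2) (by nlinarith) univ).mono
        subset_rfl (le_min le_rfl (by simpa using hT n hlarge))
    rcases le_or_le_of_sq_le_mul (Nat.cast_nonneg _) hKI with h | h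
    exacts [⟨K, .inl hK, h⟩, ⟨I, .inr hI, h⟩]
end
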